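/- arXiv:2507.20495 — 7 statements merged into one kernel-verified Lean document; each statement's English description precedes it below -/
import Mathlib

section
/- The number of parking functions with m cars and n spots (m ≤ n) is (n-m+1)(n+1)^{m-1}. -/
/-- `π : [m] → [n]` (values in `{1,…,n}`) is a parking function in `PF(m,n)`:
for every `i` with `n-m+1 ≤ i ≤ n`, `#{k : π k ≤ i} ≥ m-n+i`
(stated additively to avoid truncated subtraction; for `i ≤ n-m` the
inequality is vacuous, so quantifying over all `i ≤ n` is equivalent). -/
def IsPF (m n : ℕ) (π : Fin m → ℕ) : Prop :=
  (∀ k, 1 ≤ π k ∧ π k ≤ n) ∧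
  ∀ i, i ≤ n → m + i ≤ (Finset.univ.filter (fun k => π k ≤ i)).card + n

/-!
Pollak's circle argument. Put `N = n + 1` spots on a circle and let `m < N` cars with arbitrary
preferences in `ZMod N` park circularly: exactly `N - m` spots stay empty, and by rotation
symmetry every spot is empty for the same number of the `N ^ m` preference functions, namely
`(N - m) * N ^ (m - 1)`. Those leaving spot `0` empty are exactly the parking functions.
The parking process itself is never run: emptiness of a spot is characterised by counting
preferences, and the count `N - m` of empty spots is the cycle lemma for a walk with steps
`≥ -1` that drops by `N - m` over each period.
-/

open Finset

def IsRightToLeftMax (G : ℕ → ℤ) (t : ℕ) : Prop :=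
  ∀ t', t < t' → G t' < G t

section Walk

variable {G : ℕ → ℤ}

theorem isRightToLeftMax_iff_forall_Icc {N : ℕ} (hN : 0 < N) (hper : ∀ t, G (t + N) ≤ G t)
    {t : ℕ} : IsRightToLeftMax G t ↔ ∀ s ∈ Icc 1 N, G (t + s) < G t := by
  refine ⟨fun h s hs => h _ (by rw [mem_Icc] at hs; omega), fun h t' ht' => ?_⟩
  induction t' using Nat.strong_induction_on with
  | _ t' ih =>
    by_cases hle : t' ≤ t + N
    · simpa [show t + (t' - t) = t' by omega] using h (t' - t) (by rw [mem_Icc]; omega)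
    · calc G t' = G (t' - N + N) := by rw [Nat.sub_add_cancel (by omega)]
        _ ≤ G (t' - N) := hper _
        _ < G t := ih _ (by omega) (by omega)

/-- Take the last time the walk is at least `v`; since it steps down by at most one, it sits
exactly at `v` there. -/
theorem exists_isRightToLeftMax_eq_of_le {v : ℤ} {s b : ℕ} (hstep : ∀ t, G t ≤ G (t + 1) + 1)
    (hs : v ≤ G s) (hb : ∀ t, b ≤ t → G t < v) : ∃ T < b, G T = v ∧ IsRightToLeftMax G T := by
  set T := Nat.findGreatest (v ≤ G ·) b
  have hsb : s ≤ b := by by_contra! h; exact (hb s h.le).not_ge hs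
  have hT : v ≤ G T := Nat.findGreatest_spec (P := (v ≤ G ·)) hsb hs
  have hafter : ∀ t, T < t → G t < v := fun t ht => by
    rcases le_total t b with htb | hbt
    · exact not_le.1 (Nat.findGreatest_is_greatest ht htb)
    · exact hb t hbt
  have hTb : T < b := (Nat.findGreatest_le b).lt_of_ne fun h => (hb T h.ge).not_ge hT
  have hGT : G T = v := le_antisymm (by linarith [hstep T, hafter (T + 1) T.lt_succ_self]) hT
  exact ⟨T, hTb, hGT, fun t ht => hGT ▸ hafter t ht⟩

end Walk

open scoped Classical in
/-- Cycle lemma: the right-to-left maxima in `[0, N)` are the last visits to the levels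
`M - d < v ≤ M`, where `M` is the maximum of the walk. -/
theorem card_filter_isRightToLeftMax_range {G : ℕ → ℤ} {N d : ℕ}
    (hstep : ∀ t, G t ≤ G (t + 1) + 1) (hper : ∀ t, G (t + N) = G t - d) :
    #{t ∈ range N | IsRightToLeftMax G t} = d := by
  rcases N.eq_zero_or_pos with rfl | hN
  · have := hper 0
    rw [add_zero] at this
    simp only [range_zero, filter_empty, card_empty]
    omega
  obtain ⟨t₀, ht₀, hmax⟩ := (range N).exists_max_image G (nonempty_range_iff.2 hN.ne')
  set M := G t₀
  have hle : ∀ t, G t ≤ M := fun t => by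
    induction t using Nat.strong_induction_on with
    | _ t ih =>
      by_cases ht : t < N
      · exact hmax t (mem_range.2 ht)
      · have := hper (t - N); rw [Nat.sub_add_cancel (by omega)] at this
        linarith [ih (t - N) (by omega)]
  have hlate : ∀ t, N ≤ t → G t ≤ M - d := fun t ht => by
    have := hper (t - N); rw [Nat.sub_add_cancel ht] at this
    linarith [hle (t - N)]
  rw [← Int.toNat_natCast d, ← show M - (M - d) = d by ring, ← Int.card_Ioc]
  refine card_bij (fun t _ => G t) (fun t ht => ?_) (fun t₁ ht₁ t₂ ht₂ h => ?_) (fun v hv => ?_)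
  · simp only [mem_filter, mem_range] at ht
    have := hper t₀
    exact mem_Ioc.2 ⟨by linarith [ht.2 (t₀ + N) (by omega)], hle t⟩
  · simp only [mem_filter] at ht₁ ht₂
    by_contra hne
    rcases Nat.lt_or_gt_of_ne hne with h' | h'
    · exact (ht₁.2 t₂ h').ne' h
    · exact (ht₂.2 t₁ h').ne h
  · obtain ⟨hv₁, hv₂⟩ := mem_Ioc.1 hv
    obtain ⟨T, hT, hGT, hrec⟩ := exists_isRightToLeftMax_eq_of_le hstep (s := t₀) hv₂
      fun t ht => by linarith [hlate t ht]
    exact ⟨T, mem_filter.2 ⟨mem_range.2 hT, hrec⟩, hGT⟩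

/-- When cars with preferences `F` park on the circle `ZMod N`, each taking the first free spot
from its preference on in increasing direction, spot `a` stays empty iff for every `s ≤ N` fewer
than `s` cars prefer one of the `s` spots `a - s + 1, …, a`. -/
def IsFreeSpot {m N : ℕ} (F : Fin m → ZMod N) (a : ZMod N) : Prop :=
  ∀ s ∈ Icc 1 N, #{k | (a - F k).val < s} < s

instance {m N : ℕ} (F : Fin m → ZMod N) : DecidablePred (IsFreeSpot F) := fun a =>
  inferInstanceAs (Decidable (∀ s ∈ Icc 1 N, #{k | (a - F k).val < s} < s))

section FreeSpot

variable {m N : ℕ} (F : Fin m → ZMod N)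

theorem isFreeSpot_sub_iff (a c : ZMod N) :
    IsFreeSpot (fun k => F k - c) (a - c) ↔ IsFreeSpot F a := by
  simp only [IsFreeSpot, sub_sub_sub_cancel_right]

theorem card_filter_sub_val_lt [NeZero N] (b : ZMod N) {s : ℕ} (hs : s ≤ N) :
    #{k | (b - F k).val < s} = ∑ j ∈ range s, #{k | F k = b - j} := by
  rw [card_eq_sum_card_fiberwise (f := fun k => (b - F k).val) (t := range s)
    fun k hk => mem_range.2 (mem_filter.1 hk).2]
  refine sum_congr rfl fun j hj => congrArg card (ext fun k => ?_)
  have hjN : j < N := (mem_range.1 hj).trans_le hs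
  simp only [mem_filter, mem_univ, true_and]
  constructor
  · rintro ⟨-, hk⟩
    rw [← hk, ZMod.natCast_zmod_val, sub_sub_cancel]
  · intro hk
    rw [hk, sub_sub_cancel, ZMod.val_natCast_of_lt hjN]
    exact ⟨mem_range.1 hj, rfl⟩

def scanWalk (t : ℕ) : ℤ :=
  ∑ j ∈ range t, ((#{k | F k = -(j : ZMod N)} : ℤ) - 1)

theorem scanWalk_add (t s : ℕ) :
    scanWalk F (t + s) = scanWalk F t + ∑ j ∈ range s, #{k | F k = -(t : ZMod N) - j} - s := by
  simp only [scanWalk, sum_range_add, sum_sub_distrib, sum_const, card_range, nsmul_eq_mul,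
    mul_one, Nat.cast_add, Nat.cast_sum, neg_add']
  ring

theorem scanWalk_le_succ (t : ℕ) : scanWalk F t ≤ scanWalk F (t + 1) + 1 := by
  simp only [scanWalk, sum_range_succ]
  linarith [(#{k | F k = -(t : ZMod N)}).cast_nonneg (α := ℤ)]

theorem scanWalk_add_period [NeZero N] (hm : m ≤ N) (t : ℕ) :
    scanWalk F (t + N) = scanWalk F t - (N - m : ℕ) := by
  rw [scanWalk_add, ← card_filter_sub_val_lt F _ le_rfl]
  simp only [ZMod.val_lt, filter_true, card_univ, Fintype.card_fin, hm, Nat.cast_sub]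
  ring

theorem isFreeSpot_neg_natCast_iff [NeZero N] (t : ℕ) :
    IsFreeSpot F (-(t : ZMod N)) ↔ ∀ s ∈ Icc 1 N, scanWalk F (t + s) < scanWalk F t := by
  refine forall₂_congr fun s hs => ?_
  rw [scanWalk_add, card_filter_sub_val_lt F _ (mem_Icc.1 hs).2]
  constructor <;> intro h <;> push_cast at * <;> linarith

open scoped Classical in
theorem card_filter_isFreeSpot [NeZero N] (hm : m < N) :
    #{a | IsFreeSpot F a} = N - m := by
  have hiff : ∀ t : ℕ, IsFreeSpot F (-(t : ZMod N)) ↔ IsRightToLeftMax (scanWalk F) t :=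
    fun t => (isFreeSpot_neg_natCast_iff F t).trans
      (isRightToLeftMax_iff_forall_Icc (NeZero.pos N)
        fun t => by simp [scanWalk_add_period F hm.le]).symm
  rw [← card_filter_isRightToLeftMax_range (scanWalk_le_succ F) (scanWalk_add_period F hm.le)]
  refine card_nbij' (fun a => (-a).val) (fun t => -(t : ZMod N)) (fun a ha => ?_)
    (fun t ht => ?_) (fun a _ => ?_) (fun t ht => ?_)
  · simp only [coe_filter, mem_univ, true_and, Set.mem_ofPred_eq, mem_range] at ha ⊢
    rw [← hiff, ZMod.natCast_zmod_val, neg_neg]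
    exact ⟨ZMod.val_lt _, ha⟩
  · simp only [coe_filter, mem_range, Set.mem_ofPred_eq, mem_univ, true_and] at ht ⊢
    exact (hiff t).2 ht.2
  · simp
  · simp only [coe_filter, mem_range, Set.mem_ofPred_eq] at ht
    simp [ZMod.val_natCast_of_lt ht.1]

end FreeSpot

theorem card_filter_isFreeSpot_zero {m N : ℕ} [NeZero N] (hm : 0 < m) (hmN : m < N) :
    #{F : Fin m → ZMod N | IsFreeSpot F 0} = (N - m) * N ^ (m - 1) := by
  have hrot : ∀ a : ZMod N,
      #{F : Fin m → ZMod N | IsFreeSpot F a} = #{F : Fin m → ZMod N | IsFreeSpot F 0} :=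
    fun a => card_equiv (Equiv.subRight fun _ => a) fun F => by
      simp only [mem_filter, mem_univ, true_and, Equiv.subRight_apply]
      rw [← isFreeSpot_sub_iff F a a, sub_self]
      rfl
  have hdouble := sum_card_bipartiteAbove_eq_sum_card_bipartiteBelow
    (s := (univ : Finset (Fin m → ZMod N))) (t := univ) (r := IsFreeSpot)
  simp only [bipartiteAbove, bipartiteBelow, card_filter_isFreeSpot _ hmN, hrot, sum_const,
    card_univ, Fintype.card_fun, ZMod.card, Fintype.card_fin, smul_eq_mul] at hdouble
  apply Nat.eq_of_mul_eq_mul_left (NeZero.pos N)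
  rw [← hdouble, ← Nat.sub_add_cancel hm, pow_succ', Nat.add_sub_cancel]
  ring

theorem isFreeSpot_zero_iff_isPF {m n : ℕ} (F : Fin m → ZMod (n + 1)) :
    IsFreeSpot F 0 ↔ IsPF m n fun k => (F k).val := by
  have hcard : ∀ s ≤ n + 1, (∀ k, F k ≠ 0) →
      #{k | (0 - F k).val < s} + #{k | (F k).val ≤ n + 1 - s} = m := fun s hs hF => by
    have hsplit := card_filter_add_card_filter_not (s := univ) fun k => (F k).val ≤ n + 1 - s
    rw [card_univ, Fintype.card_fin] at hsplit
    have hneg : #{k | (0 - F k).val < s} = #{k | ¬(F k).val ≤ n + 1 - s} := by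
      refine congrArg card (filter_congr fun k _ => ?_)
      rw [zero_sub, ZMod.neg_val, if_neg (hF k)]
      have := ZMod.val_lt (F k)
      omega
    omega
  constructor
  · intro hfree
    have hF : ∀ k, F k ≠ 0 := fun k hk => by
      have := hfree 1 (by simp)
      rw [Nat.lt_one_iff, card_eq_zero, filter_eq_empty_iff] at this
      exact this (mem_univ k) (by simp [hk])
    refine ⟨fun k => ⟨ZMod.val_pos.2 (hF k), Nat.lt_succ_iff.1 (ZMod.val_lt _)⟩, fun i hi => ?_⟩
    have hlt := hfree (n + 1 - i) (by rw [mem_Icc]; omega)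
    have hsum := hcard (n + 1 - i) (by omega) hF
    rw [show n + 1 - (n + 1 - i) = i by omega] at hsum
    beta_reduce
    omega
  · rintro ⟨hrange, hpf⟩ s hs
    have hF : ∀ k, F k ≠ 0 := fun k hk => by simpa [hk] using (hrange k).1
    obtain ⟨hs₁, hs₂⟩ := mem_Icc.1 hs
    have hle := hpf (n + 1 - s) (by omega)
    have hsum := hcard s hs₂ hF
    beta_reduce at hle
    omega

theorem setOf_isPF_eq_image (m n : ℕ) :
    {π : Fin m → ℕ | IsPF m n π} =
      (fun F k => (F k).val) '' {F : Fin m → ZMod (n + 1) | IsFreeSpot F 0} := by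
  ext π
  constructor
  · intro hπ
    have hval : (fun k => ((π k : ZMod (n + 1))).val) = π :=
      funext fun k => ZMod.val_natCast_of_lt (Nat.lt_succ_of_le (hπ.1 k).2)
    exact ⟨fun k => π k, (isFreeSpot_zero_iff_isPF _).2 (by rw [hval]; exact hπ), hval⟩
  · rintro ⟨F, hF, rfl⟩
    exact (isFreeSpot_zero_iff_isPF F).1 hF

theorem card_PF (m n : ℕ) (hm : 1 ≤ m) (hmn : m ≤ n) :
    {π : Fin m → ℕ | IsPF m n π}.ncard = (n - m + 1) * (n + 1) ^ (m - 1) := by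
  have hinj : Function.Injective fun (F : Fin m → ZMod (n + 1)) k => (F k).val :=
    fun F G h => funext fun k => ZMod.val_injective _ (congrFun h k)
  rw [setOf_isPF_eq_image, Set.ncard_image_of_injective _ hinj, Set.ncard_eq_toFinset_card',
    Set.toFinset_ofPred, card_filter_isFreeSpot_zero hm (by omega : m < n + 1),
    Nat.sub_add_comm hmn]
end

section
/- The number of parking functions π ∈ PF(m,n) with π_1 = 1 is (n-m+2)(n+1)^{m-2}, for m ≥ 2. -/
/-!
Deleting the first car (which prefers spot 1) is a bijection onto `PF(m-1,n)`, so it suffices to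
show `|PF(m,n)| (n+1) = (n+1-m) (n+1)^m`. A rotation argument gives this: write `π = g + 1` with
`g : [m] → ℤ/(n+1)` and let `S t = #{k | g k < t} - t` be the surplus walk. Then `π` is parking iff
`S (n+1) < S t` for all `t ≤ n`. Adding a constant to `g` rotates the walk; its steps are `≥ -1`
and it drifts by `m - (n+1)` per period, so by the cycle lemma (count the new strict records of
its running minimum) exactly `n+1-m` of the `n+1` rotations of each `g` are parking.
-/

open Finset

section RunningMin

variable (H : ℕ → ℤ)

def runningMin : ℕ → ℤ
  | 0 => H 0
  | t + 1 => min (runningMin t) (H (t + 1))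

lemma runningMin_succ (t : ℕ) : runningMin H (t + 1) = min (runningMin H t) (H (t + 1)) := rfl

lemma runningMin_le {s t : ℕ} (h : s ≤ t) : runningMin H t ≤ H s := by
  induction t with
  | zero => rw [Nat.le_zero.1 h]; rfl
  | succ t ih =>
    rcases h.lt_or_eq with h | rfl
    · exact (min_le_left _ _).trans (ih (by omega))
    · exact min_le_right _ _

lemma exists_runningMin_eq (t : ℕ) : ∃ s ≤ t, runningMin H t = H s := by
  induction t with
  | zero => exact ⟨0, le_rfl, rfl⟩
  | succ t ih =>
    obtain ⟨s, hs, hmin⟩ := ih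
    rcases le_total (runningMin H t) (H (t + 1)) with h | h
    · exact ⟨s, by omega, (min_eq_left h).trans hmin⟩
    · exact ⟨t + 1, le_rfl, min_eq_right h⟩

lemma runningMin_succ_lt_iff (t : ℕ) :
    runningMin H (t + 1) < runningMin H t ↔ ∀ s ≤ t, H (t + 1) < H s := by
  obtain ⟨s₀, hs₀, hmin⟩ := exists_runningMin_eq H t
  rw [runningMin_succ, min_lt_iff, lt_self_iff_false, false_or]
  exact ⟨fun h s hs => h.trans_le (runningMin_le H hs), fun h => hmin ▸ h s₀ hs₀⟩

lemma runningMin_succ_le (t : ℕ) : runningMin H (t + 1) ≤ runningMin H t := min_le_left _ _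

lemma runningMin_sub_one_le (hH : ∀ t, H t - 1 ≤ H (t + 1)) (t : ℕ) :
    runningMin H t - 1 ≤ runningMin H (t + 1) :=
  le_min (by omega) ((sub_le_sub_right (runningMin_le H le_rfl) 1).trans (hH t))

variable {H} {N r : ℕ}

lemma runningMin_succ_lt_iff_of_period (hper : ∀ t, H (N + 1 + t) = H t - r) {v : ℕ}
    (hv : v < N + 1) : runningMin H (v + N + 1) < runningMin H (v + N) ↔
      ∀ i < N + 1, H (v + (N + 1)) < H (v + i) := by
  rw [runningMin_succ_lt_iff, ← add_assoc]
  refine ⟨fun h i hi => h (v + i) (by omega), fun h s hs => ?_⟩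
  rcases le_or_gt v s with hvs | hsv
  · simpa [show v + (s - v) = s by omega] using h (s - v) (by omega)
  · have := h (s + (N + 1) - v) (by omega)
    rw [show v + (s + (N + 1) - v) = N + 1 + s by omega, hper] at this
    omega

lemma runningMin_add_period (hper : ∀ t, H (N + 1 + t) = H t - r) :
    runningMin H (N + 1 + N) = runningMin H N - r := by
  obtain ⟨s₀, hs₀, h₀⟩ := exists_runningMin_eq H N
  obtain ⟨s₁, hs₁, h₁⟩ := exists_runningMin_eq H (N + 1 + N)
  have := runningMin_le H (show N + 1 + s₀ ≤ N + 1 + N by omega)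
  have := hper s₀
  rcases le_or_gt s₁ N with hs | hs
  · have := runningMin_le H hs
    omega
  · have := runningMin_le H (show s₁ - (N + 1) ≤ N by omega)
    have := hper (s₁ - (N + 1))
    rw [show N + 1 + (s₁ - (N + 1)) = s₁ by omega] at this
    omega

end RunningMin

lemma card_filter_Ico_succ_lt {f : ℕ → ℤ} (hanti : ∀ t, f (t + 1) ≤ f t)
    (hstep : ∀ t, f t - 1 ≤ f (t + 1)) {a b : ℕ} (hab : a ≤ b) :
    (#{w ∈ Ico a b | f (w + 1) < f w} : ℤ) = f a - f b := by
  induction b, hab using Nat.le_induction with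
  | base => simp
  | succ b hab ih =>
    rw [Nat.Ico_succ_right_eq_insert_Ico hab, filter_insert]
    have := hanti b
    have := hstep b
    split_ifs with h
    · rw [card_insert_of_notMem (by simp)]
      push_cast
      omega
    · omega

theorem cycle_lemma {H : ℕ → ℤ} {N r : ℕ}
    (hstep : ∀ t, H t - 1 ≤ H (t + 1)) (hper : ∀ t, H (N + t) = H t - r) :
    #{v ∈ range N | ∀ i < N, H (v + N) < H (v + i)} = r := by
  rcases N with _ | N
  · have := hper 0
    simp only [zero_add] at this
    simp only [range_zero, filter_empty, card_empty]
    omega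
  have hcount := card_filter_Ico_succ_lt (runningMin_succ_le H) (runningMin_sub_one_le H hstep)
    (show N ≤ N + 1 + N by omega)
  have hIco : Ico N (N + 1 + N) = (range (N + 1)).map (addRightEmbedding N) := by
    rw [range_eq_Ico, map_add_right_Ico, zero_add]
  rw [hIco, filter_map, card_map] at hcount
  rw [filter_congr fun v hv => (runningMin_succ_lt_iff_of_period hper (mem_range.1 hv)).symm]
  simp only [Function.comp_def, addRightEmbedding_apply] at hcount
  have := runningMin_add_period hper
  omega

section Surplus

variable {N m : ℕ} (g : Fin m → ZMod N)

def surplus (t : ℕ) : ℤ := ∑ s ∈ range t, ((#{k | g k = s} : ℤ) - 1)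

lemma surplus_sub_one_le (t : ℕ) : surplus g t - 1 ≤ surplus g (t + 1) := by
  have : (0 : ℤ) ≤ #{k | g k = t} := by positivity
  simp only [surplus, sum_range_succ]
  linarith

variable [NeZero N]

lemma card_val_lt {t : ℕ} (ht : t ≤ N) : (#{k | (g k).val < t} : ℤ) = surplus g t + t := by
  have hfib : #{k | (g k).val < t} = ∑ s ∈ range t, #{k | g k = s} := by
    rw [card_eq_sum_card_fiberwise (f := fun k => (g k).val) (t := range t)
      fun k hk => by simpa using hk]
    refine sum_congr rfl fun s hs => ?_
    rw [filter_filter]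
    refine congr_arg card (filter_congr fun k _ => ?_)
    have hsN : s < N := (mem_range.1 hs).trans_le ht
    constructor
    · rintro ⟨-, rfl⟩
      exact (ZMod.natCast_zmod_val _).symm
    · intro h
      rw [h, ZMod.val_natCast_of_lt hsN]
      exact ⟨mem_range.1 hs, rfl⟩
  simp [surplus, hfib]

lemma surplus_self : surplus g N = m - N := by
  have := card_val_lt g le_rfl
  rw [filter_true_of_mem fun k _ => ZMod.val_lt (g k), card_univ, Fintype.card_fin] at this
  omega

lemma surplus_add_period (t : ℕ) : surplus g (N + t) = surplus g t + (m - N) := by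
  rw [surplus, sum_range_add, ← surplus, surplus_self]
  simp only [Nat.cast_add, ZMod.natCast_self, zero_add]
  rw [← surplus, add_comm]

lemma surplus_add_const (c : ZMod N) (t : ℕ) :
    surplus (fun k => g k + c) t = surplus g ((-c).val + t) - surplus g (-c).val := by
  simp only [surplus, sum_range_add, add_sub_cancel_left]
  refine sum_congr rfl fun s _ => ?_
  congr 3
  refine filter_congr fun k _ => ?_
  rw [Nat.cast_add, ZMod.natCast_zmod_val, eq_neg_add_iff_add_eq, add_comm]

end Surplus

lemma card_filter_neg_val {N : ℕ} [NeZero N] (P : ℕ → Prop) [DecidablePred P] :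
    #{c : ZMod N | P (-c).val} = #{v ∈ range N | P v} := by
  refine card_nbij' (fun c => (-c).val) (fun v => -(v : ZMod N)) ?_ ?_ ?_ ?_
  · intro c hc
    simpa [ZMod.val_lt] using hc
  · intro v hv
    simp only [coe_filter, mem_range, Set.mem_ofPred_eq] at hv
    simpa [ZMod.val_natCast_of_lt hv.1] using hv.2
  · intro c _
    simp
  · intro v hv
    simp only [coe_filter, mem_range, Set.mem_ofPred_eq] at hv
    simp [ZMod.val_natCast_of_lt hv.1]

lemma card_filter_mul_card_eq_sum {ι G : Type*} [Fintype ι] [DecidableEq ι] [AddGroup G]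
    [Fintype G] (P : (ι → G) → Prop) [DecidablePred P] :
    #{f | P f} * Fintype.card G = ∑ f, #{c | P (f + Function.const ι c)} := by
  simp only [card_filter]
  rw [sum_comm, ← card_univ, mul_comm, ← smul_eq_mul, ← sum_const]
  refine sum_congr rfl fun c _ => ?_
  exact (Fintype.sum_equiv (Equiv.addRight (Function.const ι c)) _ _ fun _ => rfl).symm

instance (m n : ℕ) (π : Fin m → ℕ) : Decidable (IsPF m n π) := by
  unfold IsPF
  infer_instance

lemma isPF_iff_forall_card {m n : ℕ} {π : Fin m → ℕ} (hπ : ∀ k, 1 ≤ π k) :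
    IsPF m n π ↔ ∀ i ≤ n, m + i ≤ #{k | π k ≤ i} + n := by
  refine ⟨And.right, fun h => ⟨fun k => ⟨hπ k, ?_⟩, h⟩⟩
  have hall : #{k | π k ≤ n} = #(univ : Finset (Fin m)) := by
    have := h n le_rfl
    have := card_filter_le univ fun k => π k ≤ n
    simp only [card_univ, Fintype.card_fin] at *
    omega
  exact card_filter_eq_iff.1 hall k (mem_univ k)

lemma isPF_val_add_one_iff {m n : ℕ} (g : Fin m → ZMod (n + 1)) :
    IsPF m n (fun k => (g k).val + 1) ↔ ∀ i ≤ n, surplus g (n + 1) < surplus g i := by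
  rw [isPF_iff_forall_card fun _ => le_add_self]
  refine forall₂_congr fun i hi => ?_
  have := card_val_lt g (t := i) (by omega)
  have := surplus_self g
  simp only [Nat.add_one_le_iff]
  omega

lemma card_isPF_add_const {m n : ℕ} (hm : m ≤ n + 1) (g : Fin m → ZMod (n + 1)) :
    #{c : ZMod (n + 1) | IsPF m n (fun k => (g k + c).val + 1)} = n + 1 - m := by
  simp only [isPF_val_add_one_iff (fun k => g k + _), surplus_add_const, sub_lt_sub_iff_right,
    Nat.le_iff_lt_add_one]
  rw [card_filter_neg_val (fun v => ∀ i < n + 1, surplus g (v + (n + 1)) < surplus g (v + i))]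
  refine cycle_lemma (surplus_sub_one_le g) fun t => ?_
  rw [surplus_add_period]
  push_cast [hm]
  ring

lemma card_isPF_val_add_one_mul {m n : ℕ} (hm : m ≤ n + 1) :
    #{g : Fin m → ZMod (n + 1) | IsPF m n (fun k => (g k).val + 1)} * (n + 1) =
      (n + 1 - m) * (n + 1) ^ m := by
  have hdouble := card_filter_mul_card_eq_sum
    fun g : Fin m → ZMod (n + 1) => IsPF m n fun k => (g k).val + 1
  rw [ZMod.card] at hdouble
  rw [hdouble]
  refine (sum_congr rfl fun g _ => card_isPF_add_const hm g).trans ?_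
  simp [mul_comm]

lemma ncard_isPF_eq_card (m n : ℕ) :
    {π | IsPF m n π}.ncard = #{g : Fin m → ZMod (n + 1) | IsPF m n (fun k => (g k).val + 1)} := by
  have hinj : Function.Injective fun (g : Fin m → ZMod (n + 1)) k => (g k).val + 1 :=
    fun g g' h => funext fun k => ZMod.val_injective _ (Nat.succ_injective (congrFun h k))
  rw [← Set.ncard_coe_finset, ← Set.ncard_image_of_injective _ hinj]
  congr 1
  ext π
  simp only [coe_filter, mem_univ, true_and, Set.mem_image, Set.mem_ofPred_eq]
  refine ⟨fun hπ => ⟨fun k => ((π k - 1 : ℕ) : ZMod (n + 1)), ?_⟩, fun ⟨g, hg, hgπ⟩ => hgπ ▸ hg⟩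
  have hval : (fun k => (((π k - 1 : ℕ) : ZMod (n + 1))).val + 1) = π := by
    funext k
    have := hπ.1 k
    rw [ZMod.val_natCast_of_lt (by omega)]
    omega
  exact ⟨by rwa [hval], hval⟩

lemma ncard_isPF_mul {m n : ℕ} (hm : m ≤ n + 1) :
    {π | IsPF m n π}.ncard * (n + 1) = (n + 1 - m) * (n + 1) ^ m := by
  rw [ncard_isPF_eq_card, card_isPF_val_add_one_mul hm]

lemma isPF_cons_one_iff {m n : ℕ} (h : m + 1 ≤ n) (σ : Fin m → ℕ) :
    IsPF (m + 1) n (Fin.cons 1 σ) ↔ IsPF m n σ := by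
  simp only [IsPF, Fin.forall_fin_succ, Fin.cons_zero, Fin.cons_succ, Fin.card_filter_univ_succ',
    le_refl, true_and, and_assoc]
  rw [and_iff_right (by omega)]
  refine and_congr_right' (forall₂_congr fun i hi => ?_)
  split_ifs <;> omega

theorem card_PF_first_eq_one (m n : ℕ) (hm : 2 ≤ m) (hmn : m ≤ n) :
    {π : Fin m → ℕ | IsPF m n π ∧ π ⟨0, by omega⟩ = 1}.ncard =
      (n - m + 2) * (n + 1) ^ (m - 2) := by
  obtain ⟨k, rfl⟩ : ∃ k, m = k + 2 := ⟨m - 2, by omega⟩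
  have hcons : {π : Fin (k + 2) → ℕ | IsPF (k + 2) n π ∧ π ⟨0, by omega⟩ = 1} =
      Fin.cons 1 '' {σ | IsPF (k + 1) n σ} := by
    ext π
    refine ⟨fun ⟨hπ, h0⟩ => ?_, ?_⟩
    · have hπ' : Fin.cons 1 (Fin.tail π) = π :=
        (congrArg (Fin.cons · (Fin.tail π)) h0.symm).trans (Fin.cons_self_tail π)
      exact ⟨Fin.tail π, (isPF_cons_one_iff hmn _).1 (hπ' ▸ hπ), hπ'⟩
    · rintro ⟨σ, hσ, rfl⟩
      exact ⟨(isPF_cons_one_iff hmn σ).2 hσ, rfl⟩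
  have hcount := ncard_isPF_mul (m := k + 1) (n := n) (by omega)
  rw [hcons, Set.ncard_image_of_injective _ (Fin.cons_right_injective _)]
  apply Nat.eq_of_mul_eq_mul_right (show 0 < n + 1 by omega)
  rw [hcount, show n - (k + 2) + 2 = n + 1 - (k + 1) by omega, Nat.add_sub_cancel]
  ring
end

section
/- The generating function of the leading-elements statistic satisfies: sum over π ∈ PF(m,n) of y^{lel(π)} = (n-m+1) y (y + n)^{m-1}. -/
/-!
Pollak's circle argument. Let preferences range over `n + 1` spots on a circle, `ZMod (n + 1)`.
For `h : Fin m → ZMod (n + 1)` the walk `t ↦ ∑_{j < t} (#h⁻¹(j) - 1)` never drops by more than one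
per step and drops by `n + 1 - m` per period. The rotation `h - c` is a parking function exactly
when `c.val + (n + 1)` is a strict prefix minimum of the walk, and each period contains exactly
`n + 1 - m` of those, since the running minimum falls by one at each of them. As `lel` is invariant
under rotation, averaging over the `n + 1` rotations gives
`(n + 1) ∑_{PF(m,n)} y ^ lel = (n + 1 - m) ∑_h y ^ lel = (n + 1 - m) (n + 1) y (y + n) ^ (m - 1)`,
where in the last sum the first car contributes `y` and every other car `y` or one of the `n`
other spots.
-/

/-- The finite set of parking functions `PF(m,n)`, encoded as functions
`Fin m → Fin n`, where the preferred spot of car `k` is `(π k : ℕ) + 1 ∈ {1,…,n}`. -/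
def pf (m n : ℕ) : Finset (Fin m → Fin n) :=
  Finset.univ.filter (fun π =>
    ∀ i, i ≤ n → m + i ≤ (Finset.univ.filter (fun k => (π k : ℕ) + 1 ≤ i)).card + n)

open Finset

section PrefixMin

variable (f : ℕ → ℤ)

def IsStrictPrefixMin (u : ℕ) : Prop := ∀ t < u, f u < f t

instance : DecidablePred (IsStrictPrefixMin f) := fun _ => Nat.decidableBallLT _ _

def prefixMin (t : ℕ) : ℤ := (range (t + 1)).inf' nonempty_range_add_one f

variable {f}

lemma prefixMin_le {s t : ℕ} (h : t ≤ s) : prefixMin f s ≤ f t :=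
  inf'_le f (mem_range_succ_iff.2 h)

lemma exists_prefixMin_eq (s : ℕ) : ∃ t ≤ s, prefixMin f s = f t := by
  obtain ⟨t, ht, heq⟩ := exists_mem_eq_inf' nonempty_range_add_one f
  exact ⟨t, mem_range_succ_iff.1 ht, heq⟩

lemma prefixMin_succ (t : ℕ) : prefixMin f (t + 1) = min (f (t + 1)) (prefixMin f t) := by
  simp only [prefixMin, range_add_one (n := t + 1), inf'_insert (H := nonempty_range_add_one)]

lemma isStrictPrefixMin_succ_iff (t : ℕ) :
    IsStrictPrefixMin f (t + 1) ↔ f (t + 1) < prefixMin f t := by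
  simp only [IsStrictPrefixMin, prefixMin, lt_inf'_iff, mem_range]

lemma prefixMin_succ_of_skipFree (hf : ∀ t, f t - 1 ≤ f (t + 1)) (t : ℕ) :
    prefixMin f (t + 1) = prefixMin f t - if IsStrictPrefixMin f (t + 1) then 1 else 0 := by
  have hstep : prefixMin f t - 1 ≤ f (t + 1) :=
    (sub_le_sub_right (prefixMin_le le_rfl) 1).trans (hf t)
  rw [prefixMin_succ]
  by_cases h : IsStrictPrefixMin f (t + 1)
  · have := (isStrictPrefixMin_succ_iff t).1 h
    rw [if_pos h]; omega
  · have := (isStrictPrefixMin_succ_iff t).not.1 h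
    rw [if_neg h]; omega

lemma card_filter_isStrictPrefixMin_Ioc (hf : ∀ t, f t - 1 ≤ f (t + 1)) {s e : ℕ} (hse : s ≤ e) :
    (#{u ∈ Ioc s e | IsStrictPrefixMin f u} : ℤ) = prefixMin f s - prefixMin f e := by
  induction e, hse using Nat.le_induction with
  | base => simp
  | succ e hse ih =>
    rw [← Order.succ_eq_add_one, ← insert_Ioc_right_eq_Ioc_succ hse, filter_insert,
      Order.succ_eq_add_one, prefixMin_succ_of_skipFree hf]
    split_ifs with h
    · rw [card_insert_of_notMem (by simp), Nat.cast_succ, ih]; ring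
    · rw [ih]; ring

lemma prefixMin_add_period {p d : ℕ} (hper : ∀ t, f (t + p) + d = f t) :
    prefixMin f (p - 1 + p) = prefixMin f (p - 1) - d := by
  apply le_antisymm
  · obtain ⟨t, ht, heq⟩ := exists_prefixMin_eq (f := f) (p - 1)
    have := prefixMin_le (f := f) (show t + p ≤ p - 1 + p by omega)
    have := hper t
    omega
  · obtain ⟨t, ht, heq⟩ := exists_prefixMin_eq (f := f) (p - 1 + p)
    rcases lt_or_ge t p with htp | htp
    · have := prefixMin_le (f := f) (show t ≤ p - 1 by omega)
      omega
    · obtain ⟨s, rfl⟩ := Nat.exists_eq_add_of_le' htp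
      have := prefixMin_le (f := f) (show s ≤ p - 1 by omega)
      have := hper s
      omega

lemma isStrictPrefixMin_add_period_iff {p d : ℕ} (hp : 0 < p) (hper : ∀ t, f (t + p) + d = f t)
    (b : ℕ) : IsStrictPrefixMin f (b + p) ↔ ∀ i < p, f (b + p) < f (b + i) := by
  refine ⟨fun h i hi => h _ (by omega), fun h => ?_⟩
  have hwindow : ∀ t, b ≤ t → t < b + p → f (b + p) < f t := fun t hbt ht => by
    obtain ⟨i, rfl⟩ := Nat.exists_eq_add_of_le hbt
    exact h i (by omega)
  have hshift : ∀ j t, b ≤ t + j * p → t < b + p → f (b + p) < f t := by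
    intro j
    induction j with
    | zero => exact fun t hb => hwindow t (by simpa using hb)
    | succ j ih =>
      intro t hb ht
      rcases le_or_gt b t with hbt | hbt
      · exact hwindow t hbt ht
      · have := ih (t + p) (by rw [add_mul] at hb; omega) (by omega)
        have := hper t
        omega
  exact fun t => hshift b t (le_add_left (Nat.le_mul_of_pos_right b hp))

lemma card_filter_isStrictPrefixMin_period (hf : ∀ t, f t - 1 ≤ f (t + 1)) {p d : ℕ}
    (hper : ∀ t, f (t + p) + d = f t) :
    #{u ∈ Ioc (p - 1) (p - 1 + p) | IsStrictPrefixMin f u} = d := by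
  have := card_filter_isStrictPrefixMin_Ioc hf (show p - 1 ≤ p - 1 + p by omega)
  rw [prefixMin_add_period hper] at this
  omega

end PrefixMin

lemma sum_range_natCast_eq_sum_univ {N : ℕ} [NeZero N] {M : Type*} [AddCommMonoid M]
    (g : ZMod N → M) : ∑ j ∈ range N, g j = ∑ v, g v :=
  sum_nbij' (fun j => (j : ZMod N)) ZMod.val (fun _ _ => mem_univ _)
    (fun v _ => mem_range.2 (ZMod.val_lt v))
    (fun _ hj => ZMod.val_natCast_of_lt (mem_range.1 hj)) (fun v _ => ZMod.natCast_zmod_val v)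
    (fun _ _ => rfl)

section OccupancyWalk

variable {N : ℕ} (a : ZMod N → ℕ)

def occupancyWalk (t : ℕ) : ℤ := ∑ j ∈ range t, ((a j : ℤ) - 1)

lemma occupancyWalk_add (b i : ℕ) :
    occupancyWalk a (b + i) = occupancyWalk a b + ∑ j ∈ range i, ((a (b + j : ℕ) : ℤ) - 1) :=
  sum_range_add _ b i

lemma occupancyWalk_sub_one_le (t : ℕ) : occupancyWalk a t - 1 ≤ occupancyWalk a (t + 1) := by
  rw [occupancyWalk_add, sum_range_one]
  omega

lemma occupancyWalk_add_period [NeZero N] (t : ℕ) :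
    occupancyWalk a (t + N) = occupancyWalk a t + ∑ v, (a v : ℤ) - N := by
  have hrotate : ∑ v : ZMod N, ((a (t + v) : ℤ) - 1) = ∑ v, ((a v : ℤ) - 1) :=
    Equiv.sum_comp (Equiv.addLeft (t : ZMod N)) (fun v => (a v : ℤ) - 1)
  rw [occupancyWalk_add]
  push_cast
  rw [sum_range_natCast_eq_sum_univ (fun v : ZMod N => (a (t + v) : ℤ) - 1), hrotate,
    sum_sub_distrib]
  simp only [sum_const, card_univ, ZMod.card, nsmul_eq_mul, mul_one]
  ring

end OccupancyWalk

section Parking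

variable {m : ℕ}

def occupancy {N : ℕ} (h : Fin m → ZMod N) (v : ZMod N) : ℕ := #{k | h k = v}

lemma sum_occupancy {N : ℕ} [NeZero N] (h : Fin m → ZMod N) : ∑ v, occupancy h v = m := by
  simpa [occupancy] using
    (card_eq_sum_card_fiberwise (f := h) (s := univ) (t := univ) (fun _ _ => mem_univ _)).symm

lemma card_val_sub_lt {N : ℕ} [NeZero N] (h : Fin m → ZMod N) (c : ZMod N) {i : ℕ} (hi : i ≤ N) :
    #{k | (h k - c).val < i} = ∑ j ∈ range i, occupancy h (c + j) := by
  rw [card_eq_sum_card_fiberwise (f := fun k => (h k - c).val) (t := range i)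
    (fun k hk => mem_range.2 (mem_filter.1 hk).2)]
  refine sum_congr rfl fun j hj => ?_
  have hjN : j < N := (mem_range.1 hj).trans_le hi
  rw [filter_filter, occupancy]
  refine congrArg card (filter_congr fun k _ => ⟨fun ⟨_, hk⟩ => ?_, fun hk => ?_⟩)
  · rw [← hk, ZMod.natCast_zmod_val, add_sub_cancel]
  · simpa [hk, ZMod.val_natCast_of_lt hjN] using mem_range.1 hj

lemma occupancyWalk_occupancy_add_period {N : ℕ} [NeZero N] (h : Fin m → ZMod N)
    (hmN : m ≤ N) (t : ℕ) :
    occupancyWalk (occupancy h) (t + N) + (N - m : ℕ) = occupancyWalk (occupancy h) t := by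
  rw [occupancyWalk_add_period, ← Nat.cast_sum, sum_occupancy, Nat.cast_sub hmN]
  ring

variable {n : ℕ}

lemma val_natCast_fin (x : Fin n) : ((x : ℕ) : ZMod (n + 1)).val = x :=
  ZMod.val_natCast_of_lt (Nat.lt_succ_of_lt x.isLt)

lemma natCast_fin_injective : Function.Injective fun x : Fin n => ((x : ℕ) : ZMod (n + 1)) :=
  fun a b hab => Fin.ext (by simpa only [val_natCast_fin] using congrArg ZMod.val hab)

-- `pf m n` with preferences in `ZMod (n + 1)`: the case `i = n` forces spot `n` to stay free.
def IsParking (n : ℕ) (g : Fin m → ZMod (n + 1)) : Prop :=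
  ∀ i ≤ n, m + i ≤ #{k | (g k).val < i} + n

instance : DecidablePred (IsParking (m := m) n) := fun _ => Nat.decidableBallLE _ _

lemma IsParking.val_lt {g : Fin m → ZMod (n + 1)} (hg : IsParking n g) (k : Fin m) :
    (g k).val < n := by
  have hcard : #{k | (g k).val < n} = #(univ : Finset (Fin m)) := by
    have := hg n le_rfl
    have := card_filter_le univ (fun k => (g k).val < n)
    rw [card_univ, Fintype.card_fin] at *
    omega
  exact filter_card_eq hcard k (mem_univ k)

lemma isParking_natCast_iff (π : Fin m → Fin n) :
    IsParking n (fun k => ((π k : ℕ) : ZMod (n + 1))) ↔ π ∈ pf m n := by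
  simp only [IsParking, pf, mem_filter, mem_univ, true_and, val_natCast_fin, Nat.lt_iff_add_one_le]

lemma sum_pf_eq_sum_isParking {M : Type*} [AddCommMonoid M] (F : (Fin m → ZMod (n + 1)) → M) :
    ∑ π ∈ pf m n, F (fun k => ((π k : ℕ) : ZMod (n + 1))) = ∑ g with IsParking n g, F g := by
  refine sum_bij' (fun π _ k => ((π k : ℕ) : ZMod (n + 1)))
    (fun g hg k => ⟨(g k).val, (mem_filter.1 hg).2.val_lt k⟩) ?_ ?_ ?_ ?_ (fun _ _ => rfl)
  · exact fun π hπ => mem_filter.2 ⟨mem_univ _, (isParking_natCast_iff π).2 hπ⟩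
  · exact fun g hg => (isParking_natCast_iff _).1
      (by simpa only [ZMod.natCast_zmod_val] using (mem_filter.1 hg).2)
  · exact fun π _ => funext fun k => Fin.ext (val_natCast_fin (π k))
  · exact fun g _ => funext fun k => ZMod.natCast_zmod_val (g k)

lemma isParking_sub_iff (hmn : m ≤ n) (h : Fin m → ZMod (n + 1)) (c : ZMod (n + 1)) :
    IsParking n (fun k => h k - c) ↔
      IsStrictPrefixMin (occupancyWalk (occupancy h)) (c.val + (n + 1)) := by
  have hper := occupancyWalk_occupancy_add_period h (hmn.trans n.le_succ)
  have hwalk : ∀ i, occupancyWalk (occupancy h) (c.val + i) =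
      occupancyWalk (occupancy h) c.val + ((∑ j ∈ range i, occupancy h (c + j) : ℕ) : ℤ) - i :=
    fun i => by
      simp only [occupancyWalk_add, sum_sub_distrib, Nat.cast_add, Nat.cast_sum,
        ZMod.natCast_zmod_val]
      simp only [sum_const, card_range, nsmul_eq_mul, mul_one, add_sub_assoc]
  rw [isStrictPrefixMin_add_period_iff n.add_one_pos hper]
  refine forall_congr' fun i => ?_
  rw [Nat.lt_add_one_iff]
  refine imp_congr_right fun hin => ?_
  have hend := hper c.val
  rw [card_val_sub_lt h c (hin.trans n.le_succ), hwalk i]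
  omega

lemma card_isParking_vadd (hmn : m ≤ n) (h : Fin m → ZMod (n + 1)) :
    #{c : ZMod (n + 1) | IsParking n (c +ᵥ h)} = n + 1 - m := by
  have hvadd : ∀ c : ZMod (n + 1), c +ᵥ h = fun k => h k - -c := fun c =>
    funext fun k => (sub_neg_eq_add _ _).trans (add_comm _ _) |>.symm
  rw [← card_filter_isStrictPrefixMin_period (occupancyWalk_sub_one_le _)
    (occupancyWalk_occupancy_add_period h (hmn.trans n.le_succ)), Nat.add_sub_cancel]
  refine card_nbij' (fun c => (-c).val + (n + 1)) (fun u => -((u - (n + 1) : ℕ) : ZMod (n + 1)))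
    (fun c hc => ?_) (fun u hu => ?_) (fun c _ => ?_) (fun u hu => ?_)
  · simp only [mem_coe, mem_filter, mem_univ, true_and, hvadd, isParking_sub_iff hmn] at hc ⊢
    have := ZMod.val_lt (-c)
    exact ⟨mem_Ioc.2 ⟨by omega, by omega⟩, hc⟩
  · simp only [mem_coe, mem_filter, mem_Ioc] at hu
    have hval : (-(-((u - (n + 1) : ℕ) : ZMod (n + 1)))).val + (n + 1) = u := by
      rw [neg_neg, ZMod.val_natCast_of_lt (by omega)]
      omega
    simp only [mem_coe, mem_filter, mem_univ, true_and, hvadd, isParking_sub_iff hmn, hval]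
    exact hu.2
  · simp
  · simp only [mem_coe, mem_filter, mem_Ioc] at hu
    simp only [neg_neg, ZMod.val_natCast_of_lt (show u - (n + 1) < n + 1 by omega)]
    omega

end Parking

lemma card_nsmul_sum_filter_eq {G X M : Type*} [AddGroup G] [Fintype G] [AddAction G X]
    [Fintype X] [AddCommMonoid M] (P : X → Prop) [DecidablePred P] (w : X → M)
    (hw : ∀ (c : G) x, w (c +ᵥ x) = w x) {k : ℕ} (hk : ∀ x, #{c : G | P (c +ᵥ x)} = k) :
    Fintype.card G • ∑ x with P x, w x = k • ∑ x, w x := by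
  calc Fintype.card G • ∑ x with P x, w x
      = ∑ c : G, ∑ x, if P (c +ᵥ x) then w x else 0 := by
        rw [← card_univ, ← sum_const]
        refine sum_congr rfl fun c _ => ?_
        rw [sum_filter, ← Equiv.sum_comp (AddAction.toPerm c)]
        simp only [AddAction.toPerm_apply, hw]
    _ = ∑ x, ∑ c : G, if P (c +ᵥ x) then w x else 0 := sum_comm
    _ = ∑ x, k • w x := by
        refine sum_congr rfl fun x _ => ?_
        rw [← sum_filter, sum_const, hk]
    _ = k • ∑ x, w x := smul_sum.symm

section Lel

variable {α : Type*} [DecidableEq α] {m : ℕ}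

def lel (g : Fin (m + 1) → α) : ℕ := #{i | g i = g 0}

lemma lel_comp {β : Type*} [DecidableEq β] {φ : α → β} (hφ : Function.Injective φ)
    (g : Fin (m + 1) → α) : lel (φ ∘ g) = lel g := by
  simp only [lel, Function.comp_apply, hφ.eq_iff]

lemma pow_card_filter_eq_prod {ι R : Type*} [Fintype ι] [CommMonoid R] (p : ι → Prop)
    [DecidablePred p] (y : R) : y ^ #{i | p i} = ∏ i, if p i then y else 1 :=
  (prod_const y).symm.trans (prod_filter p _)

lemma sum_pow_lel [Fintype α] {R : Type*} [CommRing R] (y : R) :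
    ∑ g : Fin (m + 1) → α, y ^ lel g = Fintype.card α * y * (y + (Fintype.card α - 1)) ^ m := by
  have hcons : ∀ x (g : Fin m → α), y ^ lel (Fin.cons x g : Fin (m + 1) → α) =
      y * ∏ i, if g i = x then y else 1 := fun x g => by
    rw [lel, pow_card_filter_eq_prod, Fin.prod_univ_succ]
    simp only [Fin.cons_zero, Fin.cons_succ, if_true]
  have hrow : ∀ x : α, ∑ v, (if v = x then y else 1) = y + (Fintype.card α - 1) := fun x => by
    have : ∀ v, (if v = x then y else 1) = (if v = x then y - 1 else 0) + 1 := fun v => by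
      split_ifs <;> ring
    simp only [this, sum_add_distrib, Fintype.sum_ite_eq', sum_const, card_univ, nsmul_eq_mul,
      mul_one]
    ring
  have htail : ∀ x : α, ∑ g : Fin m → α, ∏ i, (if g i = x then y else 1) =
      (y + (Fintype.card α - 1)) ^ m := fun x => by
    rw [← hrow, Fintype.sum_pow]
  rw [← (Fin.consEquiv fun _ => α).sum_comp, Fintype.sum_prod_type]
  change ∑ x, ∑ g : Fin m → α, y ^ lel (Fin.cons x g : Fin (m + 1) → α) = _
  simp only [hcons, ← mul_sum, htail, sum_const, card_univ, nsmul_eq_mul]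
  ring

lemma lel_vadd {G : Type*} [AddGroup G] [DecidableEq G] (c : G) (g : Fin (m + 1) → G) :
    lel (c +ᵥ g) = lel g :=
  lel_comp (add_right_injective c) g

end Lel

theorem gf_lel (m n : ℕ) (hm : 1 ≤ m) (hmn : m ≤ n) (y : ℚ) :
    ∑ π ∈ pf m n, y ^ (Finset.univ.filter (fun i => π i = π ⟨0, by omega⟩)).card =
      ((n : ℚ) - m + 1) * y * (y + n) ^ (m - 1) := by
  obtain ⟨m, rfl⟩ : ∃ k, m = k + 1 := ⟨m - 1, by omega⟩
  have hpf : ∑ π ∈ pf (m + 1) n, y ^ #{i | π i = π ⟨0, by omega⟩} =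
      ∑ g : Fin (m + 1) → ZMod (n + 1) with IsParking n g, y ^ lel g := by
    rw [← sum_pf_eq_sum_isParking]
    exact sum_congr rfl fun π _ => congrArg (y ^ ·) (lel_comp natCast_fin_injective π).symm
  have hcount := card_nsmul_sum_filter_eq (G := ZMod (n + 1)) (IsParking n) (fun g => y ^ lel g)
    (fun c g => congrArg (y ^ ·) (lel_vadd c g)) (card_isParking_vadd hmn)
  rw [ZMod.card, sum_pow_lel, ZMod.card, nsmul_eq_mul, nsmul_eq_mul] at hcount
  rw [Nat.cast_sub (by omega : m + 1 ≤ n + 1)] at hcount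
  rw [hpf, Nat.add_sub_cancel]
  push_cast at hcount ⊢
  refine mul_left_cancel₀ (n.cast_add_one_ne_zero (R := ℚ)) (hcount.trans ?_)
  ring
end

section
/- The number of rooted forests with vertex set [a] and b components, whose roots are a fixed set of b labels, is b·a^{a-b-1}. -/
/-!
Joyal's double counting. Mark a vertex `v` of a rooted forest with parent map `g` and list the
path `v = x₀, x₁, …, xₖ₋₁` of non-roots leading to its root `ρ`. Replace `g` on `{x₀, …, xₖ₋₁}`
by the permutation sending the `i`-th of these vertices in a fixed canonical order to `xᵢ`. The
result `h` fixes the roots, and the path's vertex set is recovered from `h` as its non-root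
periodic points, so `(v, g) ↦ (ρ, h)` is a bijection. Hence `a · F = b · a ^ (a - b)`.
-/

open Function Set

namespace Function

variable {α : Type*} {f g : α → α} {s : Set α} {x : α}

theorem exists_iterate_mem_or_iterate_eq (hfg : EqOn f g sᶜ) (x : α) (k : ℕ) :
    (∃ j < k, f^[j] x ∈ s) ∨ f^[k] x = g^[k] x := by
  induction k with
  | zero => exact Or.inr rfl
  | succ k ih =>
    rcases ih with ⟨j, hj, hjs⟩ | heq
    · exact Or.inl ⟨j, by omega, hjs⟩
    · by_cases hk : f^[k] x ∈ s
      · exact Or.inl ⟨k, by omega, hk⟩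
      · rw [iterate_succ_apply', iterate_succ_apply', hfg hk, heq]
        exact Or.inr rfl

theorem mem_of_mem_periodicPts_of_iterate_mem (hs : MapsTo f s s) (hx : x ∈ periodicPts f)
    {i : ℕ} (hi : f^[i] x ∈ s) : x ∈ s := by
  obtain ⟨n, hn, hper⟩ := hx
  rw [← (hper.mul_const i).eq, ← Nat.sub_add_cancel (Nat.le_mul_of_pos_left i hn),
    iterate_add_apply]
  exact hs.iterate _ hi

theorem exists_iterate_mem_periodicPts [Finite α] (f : α → α) (x : α) :
    ∃ i, f^[i] x ∈ periodicPts f := by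
  obtain ⟨i, j, hne, heq⟩ := Finite.exists_ne_map_eq_of_infinite (f^[·] x)
  wlog hij : i < j generalizing i j
  · exact this j i hne.symm heq.symm (by omega)
  refine ⟨i, mk_mem_periodicPts (n := j - i) (by omega) ?_⟩
  change f^[j - i] (f^[i] x) = f^[i] x
  rw [← iterate_add_apply, Nat.sub_add_cancel hij.le]
  exact heq.symm

theorem mem_periodicPts_of_mapsTo_of_injOn [Finite s] (hs : MapsTo f s s) (hinj : InjOn f s)
    (hx : x ∈ s) : x ∈ periodicPts f :=
  Semiconj.mapsTo_periodicPts (g := Subtype.val) (fun _ => rfl)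
    ((hs.restrict_inj.mpr hinj).mem_periodicPts ⟨x, hx⟩)

end Function

namespace List

variable {α : Type*}

theorem iterate_getD_of_forall_getElem {l : List α} {ρ : α} {f : α → α}
    (hf : ∀ i (hi : i < l.length), f l[i] = l.getD (i + 1) ρ) {i t : ℕ}
    (hit : i + t ≤ l.length) : f^[t] (l.getD i ρ) = l.getD (i + t) ρ := by
  induction t with
  | zero => rfl
  | succ t ih =>
    rw [iterate_succ_apply', ih (by omega), getD_eq_getElem _ _ (by omega), hf _ (by omega),
      Nat.add_assoc]

variable [DecidableEq α]

/-- The map sending the `i`-th entry of `s` to the `i`-th entry of `l`. -/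
def relabel (s l : List α) (w : α) : α := l.getD (s.idxOf w) w

theorem map_relabel {s l : List α} (hs : s.Nodup) (hlen : s.length = l.length) :
    s.map (relabel s l) = l := by
  refine ext_getElem (by simpa using hlen) fun i hi _ => ?_
  rw [getElem_map, relabel, hs.idxOf_getElem, getD_eq_getElem]

theorem relabel_map {s : List α} {w : α} (f : α → α) (hw : w ∈ s) :
    relabel s (s.map f) w = f w := by
  have hi := idxOf_lt_length_iff.2 hw
  rw [relabel, getD_eq_getElem _ _ (by simpa using hi), getElem_map, getElem_idxOf]

/-- The successor of `w` along `l`, where the last entry is followed by `ρ`. -/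
def succAlong (l : List α) (ρ w : α) : α := l.getD (l.idxOf w + 1) ρ

theorem succAlong_getElem {l : List α} (hl : l.Nodup) (ρ : α) {i : ℕ} (hi : i < l.length) :
    succAlong l ρ l[i] = l.getD (i + 1) ρ := by
  rw [succAlong, hl.idxOf_getElem]

end List

namespace RootedForest

variable {α : Type*} (R : Finset α)

def FixesRoots (g : α → α) : Prop := ∀ r ∈ R, g r = r

def ReachesRoots (g : α → α) : Prop := ∀ v, ∃ K, g^[K] v ∈ R

noncomputable def hitTime (g : α → α) (v : α) : ℕ := sInf {K | g^[K] v ∈ R}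

noncomputable def root (g : α → α) (v : α) : α := g^[hitTime R g v] v

noncomputable def rootPath (g : α → α) (v : α) : List α :=
  (List.range (hitTime R g v)).map (g^[·] v)

variable {R} {g : α → α} {v w : α}

theorem FixesRoots.mapsTo (hg : FixesRoots R g) : MapsTo g R R :=
  fun r hr => (hg r hr).symm ▸ hr

theorem iterate_hitTime_mem (hv : ∃ K, g^[K] v ∈ R) : g^[hitTime R g v] v ∈ R :=
  Nat.sInf_mem hv

theorem iterate_notMem_of_lt_hitTime {i : ℕ} (hi : i < hitTime R g v) : g^[i] v ∉ R :=
  Nat.notMem_of_lt_sInf hi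

theorem hitTime_le {K : ℕ} (hK : g^[K] v ∈ R) : hitTime R g v ≤ K := Nat.sInf_le hK

/-- A repetition before the hitting time would make the orbit periodic before reaching `R`. -/
theorem injOn_iterate_hitTime (hv : ∃ K, g^[K] v ∈ R) :
    InjOn (g^[·] v) (Iio (hitTime R g v)) := by
  intro i hi j hj hij
  by_contra hne
  wlog hlt : i < j generalizing i j
  · exact this hj hi hij.symm (Ne.symm hne) (by omega)
  have hper : IsPeriodicPt g (j - i) (g^[i] v) := by
    change g^[j - i] (g^[i] v) = g^[i] v
    rw [← iterate_add_apply, Nat.sub_add_cancel hlt.le]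
    exact hij.symm
  have hmod := hper.iterate_mod_apply (hitTime R g v - i)
  rw [← iterate_add_apply, ← iterate_add_apply, Nat.sub_add_cancel (le_of_lt hi)] at hmod
  refine iterate_notMem_of_lt_hitTime ?_ (hmod ▸ iterate_hitTime_mem hv)
  have := Nat.mod_lt (hitTime R g v - i) (Nat.sub_pos_of_lt hlt)
  simp only [mem_Iio] at hj
  omega

theorem length_rootPath : (rootPath R g v).length = hitTime R g v := by simp [rootPath]

theorem getElem_rootPath {i : ℕ} (hi : i < (rootPath R g v).length) :
    (rootPath R g v)[i] = g^[i] v := by simp [rootPath]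

theorem getD_rootPath {i : ℕ} (hi : i ≤ hitTime R g v) :
    (rootPath R g v).getD i (root R g v) = g^[i] v := by
  rcases hi.lt_or_eq with hi | rfl
  · rw [List.getD_eq_getElem _ _ (length_rootPath.symm ▸ hi), getElem_rootPath]
  · rw [List.getD_eq_default _ _ length_rootPath.le, root]

theorem notMem_of_mem_rootPath (hw : w ∈ rootPath R g v) : w ∉ R := by
  obtain ⟨i, hi, rfl⟩ := by simpa [rootPath] using hw
  exact iterate_notMem_of_lt_hitTime hi

theorem nodup_rootPath (hv : ∃ K, g^[K] v ∈ R) : (rootPath R g v).Nodup :=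
  List.nodup_range.map_on fun i hi j hj =>
    injOn_iterate_hitTime hv (by simpa using hi) (by simpa using hj)

theorem apply_getElem_rootPath {i : ℕ} (hi : i < (rootPath R g v).length) :
    g (rootPath R g v)[i] = (rootPath R g v).getD (i + 1) (root R g v) := by
  rw [getD_rootPath (by rw [length_rootPath] at hi; omega), getElem_rootPath,
    iterate_succ_apply']

section Cyclic

variable [Finite α] (R)

noncomputable def cyclicPts (h : α → α) : Finset α :=
  (toFinite (periodicPts h \ R)).toFinset

/-- The path read back from `h = joyalFun R g v`, which sends the `i`-th path vertex in canonical
order to the `i`-th one along the path. -/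
noncomputable def cycleList (h : α → α) : List α := (cyclicPts R h).toList.map h

variable {R}

theorem mem_cyclicPts {h : α → α} :
    w ∈ cyclicPts R h ↔ w ∈ periodicPts h ∧ w ∉ R := by
  simp [cyclicPts]

section

variable {h : α → α} (hh : FixesRoots R h)
include hh

theorem mapsTo_cyclicPts : MapsTo h (cyclicPts R h) (cyclicPts R h) := by
  intro w hw
  rw [Finset.mem_coe, mem_cyclicPts] at hw ⊢
  exact ⟨(bijOn_periodicPts h).mapsTo hw.1,
    fun hR => hw.2 (mem_of_mem_periodicPts_of_iterate_mem (i := 1) hh.mapsTo hw.1 hR)⟩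

omit hh in
theorem injOn_cyclicPts : InjOn h (cyclicPts R h) :=
  (bijOn_periodicPts h).injOn.mono fun _ hw => (mem_cyclicPts.1 hw).1

theorem mem_cycleList : w ∈ cycleList R h ↔ w ∈ cyclicPts R h := by
  simp only [cycleList, List.mem_map, Finset.mem_toList]
  constructor
  · rintro ⟨y, hy, rfl⟩
    exact mapsTo_cyclicPts hh hy
  · intro hw
    obtain ⟨y, hy, rfl⟩ := (bijOn_periodicPts h).surjOn (mem_cyclicPts.1 hw).1
    refine ⟨y, mem_cyclicPts.2 ⟨hy, fun hyR => (mem_cyclicPts.1 hw).2 ?_⟩, rfl⟩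
    rwa [hh y hyR]

omit hh in
theorem nodup_cycleList : (cycleList R h).Nodup :=
  (Finset.nodup_toList _).map_on fun _ hx _ hy =>
    injOn_cyclicPts (Finset.mem_toList.1 hx) (Finset.mem_toList.1 hy)

end

end Cyclic

section Joyal

variable [DecidableEq α] (R)

noncomputable def joyalFun (g : α → α) (v : α) : α → α :=
  (rootPath R g v).toFinset.piecewise
    (List.relabel (rootPath R g v).toFinset.toList (rootPath R g v)) g

noncomputable def joyalInvFun [Finite α] (ρ : α) (h : α → α) : α → α :=
  (cyclicPts R h).piecewise (List.succAlong (cycleList R h) ρ) h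

noncomputable def joyalInvVertex [Finite α] (ρ : α) (h : α → α) : α :=
  (cycleList R h).getD 0 ρ

variable {R}

theorem joyalFun_eqOn_compl : EqOn (joyalFun R g v) g ((rootPath R g v).toFinset : Set α)ᶜ :=
  fun _ hw => Finset.piecewise_eq_of_notMem _ _ _ hw

theorem fixesRoots_joyalFun (hg : FixesRoots R g) : FixesRoots R (joyalFun R g v) := by
  intro r hr
  rw [joyalFun_eqOn_compl fun h => notMem_of_mem_rootPath (List.mem_toFinset.1 h) hr, hg r hr]

section

variable (hv : ∃ K, g^[K] v ∈ R)
include hv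

theorem map_joyalFun_toList :
    (rootPath R g v).toFinset.toList.map (joyalFun R g v) = rootPath R g v := by
  refine (List.map_congr_left fun w hw => ?_).trans (List.map_relabel (Finset.nodup_toList _)
    (by simp [List.toFinset_card_of_nodup (nodup_rootPath hv)]))
  exact Finset.piecewise_eq_of_mem _ _ _ (Finset.mem_toList.1 hw)

theorem mapsTo_joyalFun :
    MapsTo (joyalFun R g v) (rootPath R g v).toFinset (rootPath R g v).toFinset := by
  intro w hw
  have : joyalFun R g v w ∈ rootPath R g v := by
    rw [← map_joyalFun_toList hv]
    exact List.mem_map_of_mem (Finset.mem_toList.2 hw)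
  simpa using this

theorem injOn_joyalFun : InjOn (joyalFun R g v) (rootPath R g v).toFinset := by
  intro w₁ hw₁ w₂ hw₂
  have hnd := map_joyalFun_toList hv ▸ nodup_rootPath hv
  exact List.inj_on_of_nodup_map hnd (Finset.mem_toList.2 hw₁) (Finset.mem_toList.2 hw₂)

end

variable [Finite α]

section Forward

variable (hg : FixesRoots R g) (hr : ReachesRoots R g)
include hg hr

/-- Off the path, every orbit follows `g` until it enters the path or reaches a root. -/
theorem cyclicPts_joyalFun : cyclicPts R (joyalFun R g v) = (rootPath R g v).toFinset := by
  ext w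
  rw [mem_cyclicPts]
  constructor
  · rintro ⟨hper, hwR⟩
    obtain ⟨K, hK⟩ := hr w
    rcases exists_iterate_mem_or_iterate_eq joyalFun_eqOn_compl w K with ⟨j, -, hj⟩ | heq
    · exact mem_of_mem_periodicPts_of_iterate_mem (mapsTo_joyalFun (hr v)) hper hj
    · exact absurd (mem_of_mem_periodicPts_of_iterate_mem (fixesRoots_joyalFun hg).mapsTo hper
        (heq ▸ hK)) hwR
  · intro hw
    exact ⟨mem_periodicPts_of_mapsTo_of_injOn (mapsTo_joyalFun (hr v)) (injOn_joyalFun (hr v)) hw,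
      notMem_of_mem_rootPath (List.mem_toFinset.1 hw)⟩

theorem cycleList_joyalFun : cycleList R (joyalFun R g v) = rootPath R g v := by
  rw [cycleList, cyclicPts_joyalFun hg hr, map_joyalFun_toList (hr v)]

theorem joyalInvVertex_joyalFun : joyalInvVertex R (root R g v) (joyalFun R g v) = v := by
  rw [joyalInvVertex, cycleList_joyalFun hg hr, getD_rootPath (Nat.zero_le _)]
  rfl

theorem joyalInvFun_joyalFun : joyalInvFun R (root R g v) (joyalFun R g v) = g := by
  funext w
  rw [joyalInvFun, cyclicPts_joyalFun hg hr, cycleList_joyalFun hg hr]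
  by_cases hw : w ∈ (rootPath R g v).toFinset
  · rw [Finset.piecewise_eq_of_mem _ _ _ hw]
    obtain ⟨i, hi, rfl⟩ := List.getElem_of_mem (List.mem_toFinset.1 hw)
    rw [List.succAlong_getElem (nodup_rootPath (hr v))]
    exact (apply_getElem_rootPath hi).symm
  · rw [Finset.piecewise_eq_of_notMem _ _ _ hw, joyalFun_eqOn_compl hw]

end Forward

section Backward

variable {h : α → α} {ρ : α} (hh : FixesRoots R h)
include hh

omit hh in
theorem joyalInvFun_eqOn_compl : EqOn (joyalInvFun R ρ h) h (cyclicPts R h : Set α)ᶜ :=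
  fun _ hw => Finset.piecewise_eq_of_notMem _ _ _ hw

theorem fixesRoots_joyalInvFun : FixesRoots R (joyalInvFun R ρ h) := fun r hr => by
  rw [joyalInvFun_eqOn_compl fun hc => (mem_cyclicPts.1 hc).2 hr, hh r hr]

theorem iterate_joyalInvFun {i t : ℕ} (hit : i + t ≤ (cycleList R h).length) :
    (joyalInvFun R ρ h)^[t] ((cycleList R h).getD i ρ) = (cycleList R h).getD (i + t) ρ := by
  refine List.iterate_getD_of_forall_getElem (fun i hi => ?_) hit
  rw [joyalInvFun, Finset.piecewise_eq_of_mem _ _ _ ((mem_cycleList hh).1 (List.getElem_mem _)),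
    List.succAlong_getElem nodup_cycleList]

theorem iterate_joyalInvVertex {i : ℕ} (hi : i ≤ (cycleList R h).length) :
    (joyalInvFun R ρ h)^[i] (joyalInvVertex R ρ h) = (cycleList R h).getD i ρ := by
  have := iterate_joyalInvFun (ρ := ρ) hh (i := 0) (t := i) (by omega)
  rwa [Nat.zero_add] at this

variable (hρ : ρ ∈ R)
include hρ

theorem exists_iterate_joyalInvFun_mem_of_mem_cyclicPts (hw : w ∈ cyclicPts R h) :
    ∃ K, (joyalInvFun R ρ h)^[K] w ∈ R := by
  have hi := List.idxOf_lt_length_iff.2 ((mem_cycleList hh).2 hw)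
  have hiter := iterate_joyalInvFun (ρ := ρ) hh (Nat.add_sub_cancel' hi.le).le
  rw [List.getD_eq_getElem _ _ hi, List.getElem_idxOf, Nat.add_sub_cancel' hi.le,
    List.getD_eq_default _ _ le_rfl] at hiter
  exact ⟨_, hiter ▸ hρ⟩

/-- Every `h`-orbit becomes periodic, and `joyalInvFun` follows `h` until it meets a cyclic
point or a root. -/
theorem reachesRoots_joyalInvFun : ReachesRoots R (joyalInvFun R ρ h) := by
  intro w
  obtain ⟨K, hK⟩ := exists_iterate_mem_periodicPts h w
  obtain ⟨j, hj⟩ : ∃ j, (joyalInvFun R ρ h)^[j] w ∈ cyclicPts R h ∨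
      (joyalInvFun R ρ h)^[j] w ∈ R := by
    rcases exists_iterate_mem_or_iterate_eq joyalInvFun_eqOn_compl w K with ⟨j, -, hj⟩ | heq
    · exact ⟨j, Or.inl hj⟩
    · rw [← heq] at hK
      by_cases hKR : (joyalInvFun R ρ h)^[K] w ∈ R
      · exact ⟨K, Or.inr hKR⟩
      · exact ⟨K, Or.inl (mem_cyclicPts.2 ⟨hK, hKR⟩)⟩
  rcases hj with hj | hj
  · obtain ⟨K', hK'⟩ := exists_iterate_joyalInvFun_mem_of_mem_cyclicPts hh hρ hj
    exact ⟨K' + j, by rwa [iterate_add_apply]⟩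
  · exact ⟨j, hj⟩

theorem hitTime_joyalInvFun :
    hitTime R (joyalInvFun R ρ h) (joyalInvVertex R ρ h) = (cycleList R h).length := by
  have hmem : (joyalInvFun R ρ h)^[(cycleList R h).length] (joyalInvVertex R ρ h) ∈ R := by
    rw [iterate_joyalInvVertex hh le_rfl, List.getD_eq_default _ _ le_rfl]
    exact hρ
  refine (hitTime_le hmem).antisymm (not_lt.1 fun hlt => ?_)
  have hroot := iterate_hitTime_mem ⟨_, hmem⟩
  rw [iterate_joyalInvVertex hh hlt.le, List.getD_eq_getElem _ _ hlt] at hroot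
  exact (mem_cyclicPts.1 ((mem_cycleList hh).1 (List.getElem_mem _))).2 hroot

theorem rootPath_joyalInvFun :
    rootPath R (joyalInvFun R ρ h) (joyalInvVertex R ρ h) = cycleList R h := by
  refine List.ext_getElem (by rw [length_rootPath, hitTime_joyalInvFun hh hρ]) fun i _ hi => ?_
  rw [getElem_rootPath, iterate_joyalInvVertex hh hi.le, List.getD_eq_getElem _ _ hi]

theorem root_joyalInvFun : root R (joyalInvFun R ρ h) (joyalInvVertex R ρ h) = ρ := by
  rw [root, hitTime_joyalInvFun hh hρ, iterate_joyalInvVertex hh le_rfl,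
    List.getD_eq_default _ _ le_rfl]

theorem joyalFun_joyalInvFun :
    joyalFun R (joyalInvFun R ρ h) (joyalInvVertex R ρ h) = h := by
  have hpath :
      (rootPath R (joyalInvFun R ρ h) (joyalInvVertex R ρ h)).toFinset = cyclicPts R h := by
    ext w
    rw [rootPath_joyalInvFun hh hρ, List.mem_toFinset, mem_cycleList hh]
  funext w
  rw [joyalFun, hpath, rootPath_joyalInvFun hh hρ]
  by_cases hw : w ∈ cyclicPts R h
  · rw [Finset.piecewise_eq_of_mem _ _ _ hw, cycleList,
      List.relabel_map _ (Finset.mem_toList.2 hw)]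
  · rw [Finset.piecewise_eq_of_notMem _ _ _ hw, joyalInvFun_eqOn_compl hw]

end Backward

variable (R)

noncomputable def joyalEquiv :
    α × {g : α → α // FixesRoots R g ∧ ReachesRoots R g} ≃
      R × {h : α → α // FixesRoots R h} where
  toFun p := (⟨root R p.2.1 p.1, iterate_hitTime_mem (p.2.2.2 p.1)⟩,
    ⟨joyalFun R p.2.1 p.1, fixesRoots_joyalFun p.2.2.1⟩)
  invFun q := (joyalInvVertex R q.1 q.2.1,
    ⟨joyalInvFun R q.1 q.2.1, fixesRoots_joyalInvFun q.2.2,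
      reachesRoots_joyalInvFun q.2.2 q.1.2⟩)
  left_inv := by
    rintro ⟨v, g, hg, hr⟩
    exact Prod.ext (joyalInvVertex_joyalFun hg hr) (Subtype.ext (joyalInvFun_joyalFun hg hr))
  right_inv := by
    rintro ⟨⟨ρ, hρ⟩, h, hh⟩
    exact Prod.ext (Subtype.ext (root_joyalInvFun hh hρ))
      (Subtype.ext (joyalFun_joyalInvFun hh hρ))

end Joyal

section Counting

variable [DecidableEq α] (R)

def extendEquiv : ({v // v ∉ R} → α) ≃ {g : α → α // FixesRoots R g} where
  toFun f := ⟨fun w => if hw : w ∈ R then w else f ⟨w, hw⟩, fun _ hr => dif_pos hr⟩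
  invFun g v := g.1 v
  left_inv f := funext fun v => dif_neg v.2
  right_inv g := Subtype.ext <| funext fun w => by
    dsimp only
    split_ifs with hw
    exacts [(g.2 w hw).symm, rfl]

theorem ncard_reachesRoots_extendEquiv :
    {f : {v // v ∉ R} → α | ReachesRoots R (extendEquiv R f).1}.ncard =
      Nat.card {g : α → α // FixesRoots R g ∧ ReachesRoots R g} := by
  rw [← Nat.card_coe_set_eq]
  exact Nat.card_congr (((extendEquiv R).subtypeEquiv fun _ => Iff.rfl).trans
    (Equiv.subtypeSubtypeEquivSubtypeInter (FixesRoots R) (ReachesRoots R)))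

variable [Finite α]

theorem card_mul_card_rootedForests :
    Nat.card α * Nat.card {g : α → α // FixesRoots R g ∧ ReachesRoots R g} =
      R.card * Nat.card α ^ (Nat.card α - R.card) := by
  have := Fintype.ofFinite α
  rw [← Nat.card_prod, Nat.card_congr (joyalEquiv R), Nat.card_prod,
    ← Nat.card_congr (extendEquiv R), Nat.card_fun]
  simp [Nat.card_eq_fintype_card, Fintype.card_subtype_compl]

end Counting

end RootedForest

theorem card_rooted_forests_general (a b : ℕ) (hba : b < a)
    (R : Finset (Fin a)) (hR : R.card = b) :
    {f : {v : Fin a // v ∉ R} → Fin a |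
        ∀ v : Fin a, ∃ K : ℕ,
          (fun w => if h : w ∈ R then w else f ⟨w, h⟩)^[K] v ∈ R}.ncard =
      b * a ^ (a - b - 1) := by
  have hcount := RootedForest.card_mul_card_rootedForests R
  rw [Nat.card_fin, hR, ← RootedForest.ncard_reachesRoots_extendEquiv,
    show a - b = a - b - 1 + 1 by omega, pow_succ] at hcount
  exact Nat.eq_of_mul_eq_mul_left (by omega : 0 < a) (hcount.trans (by ring))

/-- The number of rooted forests on vertex set `[a]` with `b` components whose
roots are a fixed set `R` of `b` vertices is `b * a^(a-b-1)`. A forest is encoded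
by its parent map `f`, defined on the non-root vertices; acyclicity says that
from every vertex, iterating the (extended) parent map eventually reaches `R`. -/
theorem card_rooted_forests (a b : ℕ) (hb : 1 ≤ b) (hba : b < a)
    (R : Finset (Fin a)) (hR : R.card = b) :
    {f : {v : Fin a // v ∉ R} → Fin a |
        ∀ v : Fin a, ∃ K : ℕ,
          (fun w => if h : w ∈ R then w else f ⟨w, h⟩)^[K] v ∈ R}.ncard =
      b * a ^ (a - b - 1) :=
  card_rooted_forests_general a b hba R hR
end

section
/- On the set of labeled rooted trees on vertex set {0,1,...,n} with root 0, the statistic deg(0) (number of children of the root) is equidistributed with the statistic deg(p), the number of children of the parent of vertex 1: for every k, #{T : deg(0)=k} = #{T : deg(p)=k}. -/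
/-!
If the parent `p` of vertex `1` is not the root, let `c` be the ancestor of `1` that is a child of
the root. Exchange the children of `0` and of `p`, except that `1` stays under `p` and `c` under
`0`. The path `1 → p → ⋯ → c → 0` is untouched, so the result is again a tree in which `1` has
parent `p` and `c` is the same vertex; hence the exchange is an involution, and it swaps the
degrees of `0` and `p`.
-/

open Finset Function

namespace ParentMap

section Depth

variable {α : Type*} {P : α → α} {r x : α}

def ReachesRoot (P : α → α) (r v : α) : Prop := ∃ K, P^[K] v = r

/-- The number of steps from `x` to `r` along `P`; junk value `0` if `r` is never reached. -/
noncomputable def depth (P : α → α) (r x : α) : ℕ := sInf {K | P^[K] x = r}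

/-- The ancestor of `x` that is a child of `r` (`x` itself when `x = r`). -/
noncomputable def topAncestor (P : α → α) (r x : α) : α := P^[depth P r x - 1] x

lemma iterate_depth (h : ReachesRoot P r x) : P^[depth P r x] x = r := Nat.sInf_mem h

lemma iterate_ne_of_lt_depth {j : ℕ} (hj : j < depth P r x) : P^[j] x ≠ r :=
  Nat.notMem_of_lt_sInf hj

lemma iterate_ne_iterate (h : ReachesRoot P r x) {a b : ℕ} (hab : a < b)
    (hb : b ≤ depth P r x) : P^[a] x ≠ P^[b] x := by
  intro heq
  apply iterate_ne_of_lt_depth (P := P) (r := r) (x := x) (j := depth P r x - b + a) (by omega)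
  rw [iterate_add_apply, heq, ← iterate_add_apply, Nat.sub_add_cancel hb]
  exact iterate_depth h

lemma depth_pos (h : ReachesRoot P r x) (hx : x ≠ r) : 0 < depth P r x :=
  Nat.pos_of_ne_zero fun h0 => hx (by simpa [h0] using iterate_depth h)

lemma topAncestor_ne_root (h : ReachesRoot P r x) (hx : x ≠ r) : topAncestor P r x ≠ r :=
  iterate_ne_of_lt_depth (Nat.sub_lt (depth_pos h hx) one_pos)

lemma depth_self : depth P x x = 0 := Nat.sInf_eq_zero.2 (Or.inl rfl)

lemma topAncestor_self : topAncestor P x x = x := by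
  simp [topAncestor, depth_self]

lemma apply_topAncestor (hroot : P r = r) (h : ReachesRoot P r x) :
    P (topAncestor P r x) = r := by
  by_cases hx : x = r
  · subst hx
    rwa [topAncestor_self]
  · have hK := depth_pos h hx
    rw [topAncestor, ← iterate_succ_apply' P]
    convert iterate_depth h using 2
    omega

lemma ReachesRoot.of_apply {v : α} (h : ReachesRoot P r (P v)) : ReachesRoot P r v := by
  obtain ⟨K, hK⟩ := h
  exact ⟨K + 1, by rwa [iterate_succ_apply]⟩

lemma ReachesRoot.of_forall {G : α → α} (hG : ∀ w, G w = P w ∨ ReachesRoot G r w) {v : α}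
    (h : ReachesRoot P r v) : ReachesRoot G r v := by
  obtain ⟨K, hK⟩ := h
  induction K generalizing v with
  | zero => exact ⟨0, hK⟩
  | succ K ih =>
    rcases hG v with hv | hv
    · exact ReachesRoot.of_apply (hv ▸ ih hK)
    · exact hv

lemma ReachesRoot.apply (hroot : P r = r) {v : α} (h : ReachesRoot P r v) :
    ReachesRoot P r (P v) := by
  obtain ⟨K, hK⟩ := h
  exact ⟨K, by rw [← iterate_succ_apply, iterate_succ_apply', hK, hroot]⟩

end Depth

section Exchange

variable {α : Type*} [DecidableEq α] {P : α → α} {r x : α}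

open Equiv

/-- Moves the children of `r` under `P x` and those of `P x` under `r`, except that `x` stays
under `P x` and its top ancestor stays under `r`. -/
noncomputable def exchange (P : α → α) (r x : α) : α → α := fun v =>
  if v = r then r else swap r (P x) (P (swap x (topAncestor P r x) v))

lemma exchange_root : exchange P r x r = r := if_pos rfl

lemma exchange_of_ne_root {v : α} (hv : v ≠ r) :
    exchange P r x v = swap r (P x) (P (swap x (topAncestor P r x) v)) := if_neg hv

lemma exchange_self (hroot : P r = r) (h : ReachesRoot P r x) : exchange P r x x = P x := by
  by_cases hx : x = r
  · subst hx
    rw [exchange_root, hroot]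
  · rw [exchange_of_ne_root hx, swap_apply_left, apply_topAncestor hroot h, swap_apply_left]

lemma exchange_topAncestor (h : ReachesRoot P r x) (hx : x ≠ r) :
    exchange P r x (topAncestor P r x) = r := by
  rw [exchange_of_ne_root (topAncestor_ne_root h hx), swap_apply_right, swap_apply_right]

lemma exchange_eq_of_ne {v : α} (hv : v ≠ r) (hvx : v ≠ x) (hvc : v ≠ topAncestor P r x)
    (hPv : P v ≠ r) (hPvx : P v ≠ P x) : exchange P r x v = P v := by
  rw [exchange_of_ne_root hv, swap_apply_of_ne_of_ne hvx hvc, swap_apply_of_ne_of_ne hPv hPvx]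

lemma swap_topAncestor_root (h : ReachesRoot P r x) : swap x (topAncestor P r x) r = r := by
  by_cases hx : x = r
  · subst hx
    rw [topAncestor_self, swap_self, refl_apply]
  · exact swap_apply_of_ne_of_ne (Ne.symm hx) (topAncestor_ne_root h hx).symm

lemma exchange_iterate (hroot : P r = r) (h : ReachesRoot P r x) {j : ℕ}
    (hj : j < depth P r x) : exchange P r x (P^[j] x) = P^[j + 1] x := by
  rcases Nat.eq_zero_or_pos j with rfl | hj0
  · exact exchange_self hroot h
  have hx : x ≠ r := by
    rintro rfl
    simp [depth_self] at hj
  by_cases hjK : j + 1 = depth P r x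
  · rw [hjK, iterate_depth h, show j = depth P r x - 1 by omega]
    exact exchange_topAncestor h hx
  rw [iterate_succ_apply']
  apply exchange_eq_of_ne (iterate_ne_of_lt_depth hj)
  · exact (iterate_ne_iterate h hj0 hj.le).symm
  · exact iterate_ne_iterate h (by omega) (by omega)
  · rw [← iterate_succ_apply' P]
    exact iterate_ne_of_lt_depth (by omega)
  · rw [← iterate_succ_apply' P]
    exact (iterate_ne_iterate h (a := 1) (by omega) (by omega)).symm

lemma iterate_exchange (hroot : P r = r) (h : ReachesRoot P r x) {j : ℕ}
    (hj : j ≤ depth P r x) : (exchange P r x)^[j] x = P^[j] x := by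
  induction j with
  | zero => rfl
  | succ j ih => rw [iterate_succ_apply', ih (by omega), exchange_iterate hroot h (by omega)]

lemma depth_exchange (hroot : P r = r) (h : ReachesRoot P r x) :
    depth (exchange P r x) r x = depth P r x := by
  have hK := iterate_exchange hroot h le_rfl
  rw [iterate_depth h] at hK
  refine le_antisymm (Nat.sInf_le hK) (not_lt.1 fun hlt => ?_)
  apply iterate_ne_of_lt_depth hlt
  rw [← iterate_exchange hroot h hlt.le]
  exact iterate_depth ⟨_, hK⟩

lemma topAncestor_exchange (hroot : P r = r) (h : ReachesRoot P r x) :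
    topAncestor (exchange P r x) r x = topAncestor P r x := by
  rw [topAncestor, depth_exchange hroot h, iterate_exchange hroot h (Nat.sub_le _ _), topAncestor]

lemma reachesRoot_exchange (hroot : P r = r) (hP : ∀ v, ReachesRoot P r v) (v : α) :
    ReachesRoot (exchange P r x) r v := by
  have hx : ReachesRoot (exchange P r x) r x :=
    ⟨_, (iterate_exchange hroot (hP x) le_rfl).trans (iterate_depth (hP x))⟩
  have hPx : ReachesRoot (exchange P r x) r (P x) := by
    simpa [exchange_self hroot (hP x)] using hx.apply exchange_root
  -- every other edge is kept or redirected to `r` or `P x`, which both reach `r`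
  refine ReachesRoot.of_forall (fun w => ?_) (hP v)
  by_cases hw : w = r
  · subst hw
    exact .inl (by rw [exchange_root, hroot])
  by_cases hwx : w = x
  · subst hwx
    exact .inl (exchange_self hroot (hP w))
  by_cases hwc : w = topAncestor P r x
  · have hxr : x ≠ r := by rintro rfl; exact hw (hwc.trans topAncestor_self)
    exact .inl (by rw [hwc, exchange_topAncestor (hP x) hxr, apply_topAncestor hroot (hP x)])
  have hσw := swap_apply_of_ne_of_ne hwx hwc
  by_cases hPw : P w = r
  · refine .inr (ReachesRoot.of_apply ?_)
    rwa [exchange_of_ne_root hw, hσw, hPw, swap_apply_left]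
  by_cases hPwx : P w = P x
  · refine .inr (ReachesRoot.of_apply ⟨0, ?_⟩)
    rw [iterate_zero_apply, exchange_of_ne_root hw, hσw, hPwx, swap_apply_right]
  exact .inl (exchange_eq_of_ne hw hwx hwc hPw hPwx)

lemma exchange_exchange (hroot : P r = r) (h : ReachesRoot P r x) :
    exchange (exchange P r x) r x = P := by
  funext v
  by_cases hv : v = r
  · rw [hv, exchange_root, hroot]
  have hσv : swap x (topAncestor P r x) v ≠ r := by
    rwa [(Equiv.swap _ _).injective.ne_iff' (swap_topAncestor_root h)]
  rw [exchange_of_ne_root hv, topAncestor_exchange hroot h, exchange_self hroot h,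
    exchange_of_ne_root hσv, swap_apply_self, swap_apply_self]

lemma card_filter_exchange_eq [Fintype α] (h : ReachesRoot P r x) (y : α) :
    #{v | v ≠ r ∧ exchange P r x v = y} = #{v | v ≠ r ∧ P v = swap r (P x) y} := by
  refine card_equiv (swap x (topAncestor P r x)) fun v => ?_
  simp only [mem_filter, mem_univ, true_and]
  rw [(Equiv.swap _ _).injective.ne_iff' (swap_topAncestor_root h)]
  exact and_congr_right fun hv => by rw [exchange_of_ne_root hv, swap_apply_eq_iff]

end Exchange

section Fin

variable {n : ℕ}

def toParentMap (f : Fin n → Fin (n + 1)) : Fin (n + 1) → Fin (n + 1) := fun w =>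
  if h : (w : ℕ) = 0 then w else f ⟨(w : ℕ) - 1, by have := w.isLt; omega⟩

lemma toParentMap_zero (f : Fin n → Fin (n + 1)) : toParentMap f 0 = 0 := by
  simp [toParentMap]

lemma toParentMap_succ (f : Fin n → Fin (n + 1)) (i : Fin n) : toParentMap f i.succ = f i := by
  simp [toParentMap]

lemma toParentMap_comp_succ {P : Fin (n + 1) → Fin (n + 1)} (hP : P 0 = 0) :
    toParentMap (fun i => P i.succ) = P := by
  funext w
  cases w using Fin.cases with
  | zero => rw [toParentMap_zero, hP]
  | succ i => rw [toParentMap_succ]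

lemma card_filter_eq_toParentMap (f : Fin n → Fin (n + 1)) (a : Fin (n + 1)) :
    #{i | f i = a} = #{v | v ≠ 0 ∧ toParentMap f v = a} := by
  rw [Fin.card_filter_univ_succ]
  simp [toParentMap_succ, Fin.succ_ne_zero]

noncomputable def exchangeFun (f : Fin n → Fin (n + 1)) (j : Fin n) : Fin n → Fin (n + 1) :=
  fun i => exchange (toParentMap f) 0 j.succ i.succ

variable {f : Fin n → Fin (n + 1)} {j : Fin n}

lemma toParentMap_exchangeFun :
    toParentMap (exchangeFun f j) = exchange (toParentMap f) 0 j.succ :=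
  toParentMap_comp_succ exchange_root

lemma exchangeFun_exchangeFun (hf : ∀ v, ReachesRoot (toParentMap f) 0 v) :
    exchangeFun (exchangeFun f j) j = f := by
  funext i
  rw [exchangeFun, toParentMap_exchangeFun, exchange_exchange (toParentMap_zero f) (hf _),
    toParentMap_succ]

lemma reachesRoot_exchangeFun (hf : ∀ v, ReachesRoot (toParentMap f) 0 v) (v : Fin (n + 1)) :
    ReachesRoot (toParentMap (exchangeFun f j)) 0 v := by
  rw [toParentMap_exchangeFun]
  exact reachesRoot_exchange (toParentMap_zero f) hf v

lemma card_filter_exchangeFun_eq_zero (hf : ∀ v, ReachesRoot (toParentMap f) 0 v) :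
    #{i | exchangeFun f j i = 0} = #{i | f i = f j} := by
  rw [card_filter_eq_toParentMap, card_filter_eq_toParentMap, toParentMap_exchangeFun,
    card_filter_exchange_eq (hf _), Equiv.swap_apply_left, toParentMap_succ]

lemma card_filter_exchangeFun_eq_self (hf : ∀ v, ReachesRoot (toParentMap f) 0 v) :
    #{i | exchangeFun f j i = exchangeFun f j j} = #{i | f i = 0} := by
  have hj : exchangeFun f j j = f j := by
    rw [exchangeFun, exchange_self (toParentMap_zero f) (hf _), toParentMap_succ]
  rw [hj, card_filter_eq_toParentMap, card_filter_eq_toParentMap, toParentMap_exchangeFun,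
    card_filter_exchange_eq (hf _), ← toParentMap_succ f j, Equiv.swap_apply_right]

theorem ncard_root_degree_eq_ncard_parent_degree (j : Fin n) (k : ℕ) :
    {f : Fin n → Fin (n + 1) | (∀ v, ReachesRoot (toParentMap f) 0 v) ∧ #{i | f i = 0} = k}.ncard =
      {f : Fin n → Fin (n + 1) |
        (∀ v, ReachesRoot (toParentMap f) 0 v) ∧ #{i | f i = f j} = k}.ncard := by
  refine Set.BijOn.ncard_eq (f := (exchangeFun · j)) (Set.InvOn.bijOn
    ⟨fun f hf => exchangeFun_exchangeFun hf.1, fun f hf => exchangeFun_exchangeFun hf.1⟩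
    (fun f hf => ⟨reachesRoot_exchangeFun hf.1, ?_⟩)
    (fun f hf => ⟨reachesRoot_exchangeFun hf.1, ?_⟩))
  · rw [card_filter_exchangeFun_eq_self hf.1, hf.2]
  · rw [card_filter_exchangeFun_eq_zero hf.1, hf.2]

end Fin

end ParentMap

/-- On labeled rooted trees on `{0,1,…,n}` with root `0` (encoded by the parent
map `f : Fin n → Fin (n+1)`, where index `i : Fin n` stands for the vertex
labeled `i+1`, and acyclicity says iterating the parent map from any vertex
reaches the root `0`), the root degree `#{i : f i = 0}` is equidistributed
with the degree `#{i : f i = f 1}` of the parent of vertex `1`. -/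
theorem deg0_degp_equidistributed (n : ℕ) (hn : 1 ≤ n) (k : ℕ) :
    {f : Fin n → Fin (n + 1) |
        (∀ v : Fin (n + 1), ∃ K : ℕ,
          (fun w : Fin (n + 1) =>
            if h : (w : ℕ) = 0 then w
            else f ⟨(w : ℕ) - 1, by have := w.isLt; omega⟩)^[K] v = 0) ∧
        (Finset.univ.filter (fun i : Fin n => f i = 0)).card = k}.ncard =
    {f : Fin n → Fin (n + 1) |
        (∀ v : Fin (n + 1), ∃ K : ℕ,
          (fun w : Fin (n + 1) =>
            if h : (w : ℕ) = 0 then w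
            else f ⟨(w : ℕ) - 1, by have := w.isLt; omega⟩)^[K] v = 0) ∧
        (Finset.univ.filter (fun i : Fin n => f i = f ⟨0, by omega⟩)).card = k}.ncard :=
  ParentMap.ncard_root_degree_eq_ncard_parent_degree ⟨0, hn⟩ k
end

section
/- Let π: [m] → [a+(m-1)b], let s = #{k : π_k ≤ a}, and let j_1 < ... < j_{m-s} enumerate the indices with π_{j} > a. Define π̃: [m-s] → [m-1] by π̃_i = ⌈(π_{j_i} - a)/b⌉. Then π is an (a,b)-parking function of length m if and only if π̃ is a parking function in PF(m-s, m-1). -/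
/-- `π` is an `(a,b)`-parking function of length `m`. -/
def IsABPF (a b m : ℕ) (π : Fin m → ℕ) : Prop :=
  (∀ k, 1 ≤ π k) ∧
  ∀ i : Fin m, (i : ℕ) + 1 ≤ (Finset.univ.filter (fun k => π k ≤ a + (i : ℕ) * b)).card

/-- Decomposition lemma for `(a,b)`-parking functions: with
`s = #{k : π k ≤ a}` and `j₁ < … < j_{m-s}` enumerating the positions where
`π > a`, `π ∈ PF(a,b,m)` iff `π̃ i = ⌈(π (jᵢ) - a)/b⌉ ∈ PF(m-s, m-1)`
(the natural-number expression `(π j - a + b - 1)/b` is the ceiling). -/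
theorem isABPF_iff_shifted (a b m s : ℕ) (ha : 1 ≤ a) (hb : 1 ≤ b)
    (π : Fin m → ℕ) (hπ : ∀ k, 1 ≤ π k ∧ π k ≤ a + (m - 1) * b)
    (hs : s = (Finset.univ.filter (fun k => π k ≤ a)).card)
    (hcard : (Finset.univ.filter (fun k => a < π k)).card = m - s) :
    IsABPF a b m π ↔
      IsPF (m - s) (m - 1)
        (fun i =>
          (π ((Finset.univ.filter (fun k => a < π k)).orderEmbOfFin hcard i) - a + b - 1) / b) := by
  have hb0 : 0 < b := hb
  set T := Finset.univ.filter (fun k : Fin m => a < π k) with hT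
  set e := T.orderEmbOfFin hcard with he
  have hsm : s ≤ m := by
    rw [hs]
    calc (Finset.univ.filter (fun k : Fin m => π k ≤ a)).card
        ≤ (Finset.univ : Finset (Fin m)).card := Finset.card_filter_le _ _
      _ = m := by simp
  have key : ∀ x h : ℕ, (x + b - 1) / b ≤ h ↔ x ≤ h * b := by
    intro x h
    rw [Nat.div_le_iff_le_mul_add_pred hb0, mul_comm]
    omega
  have hmemT : ∀ k, k ∈ T ↔ a < π k := by
    intro k; simp [hT]
  have hcount : ∀ h : ℕ,
      (Finset.univ.filter (fun i : Fin (m - s) => (π (e i) - a + b - 1) / b ≤ h)).card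
        = (T.filter (fun k => π k ≤ a + h * b)).card := by
    intro h
    apply Finset.card_bij (fun i _ => e i)
    · intro i hi
      simp only [Finset.mem_filter, Finset.mem_univ, true_and] at hi ⊢
      have hmem : e i ∈ T := Finset.orderEmbOfFin_mem T hcard i
      have ha' : a < π (e i) := (hmemT _).mp hmem
      refine ⟨hmem, ?_⟩
      have := (key (π (e i) - a) h).mp hi
      omega
    · intro i _ j _ hij
      exact (T.orderEmbOfFin hcard).injective hij
    · intro k hk
      simp only [Finset.mem_filter] at hk
      have hkT : (k : Fin m) ∈ (T : Set (Fin m)) := hk.1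
      rw [← Finset.range_orderEmbOfFin T hcard] at hkT
      obtain ⟨i, hi⟩ := hkT
      have ha' : a < π k := (hmemT _).mp hk.1
      refine ⟨i, ?_, hi⟩
      simp only [Finset.mem_filter, Finset.mem_univ, true_and]
      rw [he, hi, key]
      omega
  have split : ∀ N, a ≤ N →
      (Finset.univ.filter (fun k : Fin m => π k ≤ N)).card
        = s + (T.filter (fun k => π k ≤ N)).card := by
    intro N hN
    have hdisj : Disjoint (Finset.univ.filter (fun k : Fin m => π k ≤ a))
        (T.filter (fun k => π k ≤ N)) := by
      rw [Finset.disjoint_left]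
      intro k hk hk'
      simp only [Finset.mem_filter, Finset.mem_univ, true_and] at hk hk'
      have := (hmemT k).mp hk'.1
      omega
    rw [hs, ← Finset.card_union_of_disjoint hdisj]
    congr 1
    rw [hT, Finset.filter_filter, ← Finset.filter_or]
    apply Finset.filter_congr
    intro k _
    omega
  constructor
  · rintro ⟨h1, h2⟩
    refine ⟨?_, ?_⟩
    · intro i
      have hmem : e i ∈ T := Finset.orderEmbOfFin_mem T hcard i
      have ha' : a < π (e i) := (hmemT _).mp hmem
      have hub := (hπ (e i)).2
      constructor
      · by_contra hcon
        push_neg at hcon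
        have := (key (π (e i) - a) 0).mp (by omega)
        omega
      · rw [key]
        omega
    · intro h hh
      rcases Nat.eq_zero_or_pos m with hm | hm
      · subst hm
        have hcard0 : (Finset.univ.filter
            (fun i : Fin (0 - s) => (π (e i) - a + b - 1) / b ≤ h)).card ≤ 0 - s := by
          calc _ ≤ (Finset.univ : Finset (Fin (0 - s))).card := Finset.card_filter_le _ _
            _ = 0 - s := by simp
        omega
      · have hhm : h < m := by omega
        have h2' : h + 1 ≤ (Finset.univ.filter (fun k => π k ≤ a + h * b)).card := by
          simpa using h2 ⟨h, hhm⟩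
        rw [split (a + h * b) (Nat.le_add_right _ _)] at h2'
        rw [hcount h]
        omega
  · rintro ⟨g1, g2⟩
    refine ⟨fun k => (hπ k).1, ?_⟩
    intro i
    have hm : 0 < m := i.pos
    have hi : (i : ℕ) ≤ m - 1 := by omega
    have hg := g2 (i : ℕ) hi
    rw [hcount (i : ℕ)] at hg
    rw [split (a + (i : ℕ) * b) (Nat.le_add_right _ _)]
    omega
end

section
/- The multivariate generating function over (a,b)-parking functions of length m satisfies: sum over π ∈ PF(a,b,m) of x_1^{#1(π)} ··· x_a^{#a(π)} = (x_1 + ... + x_a)(x_1 + ... + x_a + mb)^{m-1}, where #j(π) = #{i : π_i = j}. -/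
/-!
Let `S = x₁ + ⋯ + x_a` and sort the cars by whether they park among the first `a` spots. If `B`
is the set of those cars, `k = |B|`, then the cars of `B` may prefer any of the first `a` spots
freely, while the remaining cars, with their preferences shifted down by `a`, form exactly a
`(kb, b)`-parking function. So the generating function over `m` cars is
`∑_k (m choose k) S^k N(kb, b, m - k)`, where `N` counts parking functions. By strong induction on
the number of cars, `N(kb, b, n) = kb (mb)^(n-1)` for `0 < n`, and `(m choose k) k = m (m-1 choose k-1)`
turns the sum into the binomial expansion of `S (S + mb)^(m-1)`.
-/

/-- The finite set of `(a,b)`-parking functions of length `m`, encoded as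
functions `Fin m → Fin (a + (m-1)*b)`, where the value of car `k` is
`(π k : ℕ) + 1 ∈ {1, …, a+(m-1)b}`. -/
def abpf (a b m : ℕ) : Finset (Fin m → Fin (a + (m - 1) * b)) :=
  Finset.univ.filter (fun π =>
    ∀ i : Fin m,
      (i : ℕ) + 1 ≤ (Finset.univ.filter (fun k => (π k : ℕ) + 1 ≤ a + (i : ℕ) * b)).card)

open Finset

lemma Finset.prod_filter_lt_eq_prod_pow {α M : Type*} [CommMonoid M] (s : Finset α) (g : α → ℕ)
    (a : ℕ) (X : ℕ → M) :
    ∏ i ∈ s with g i < a, X (g i) = ∏ j ∈ range a, X j ^ #{i ∈ s | g i = j} := by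
  rw [← prod_fiberwise_of_maps_to (t := range a) (g := g)
    fun i hi => mem_range.2 (mem_filter.1 hi).2]
  refine prod_congr rfl fun j hj => ?_
  rw [filter_filter, prod_congr rfl fun i hi => by rw [(mem_filter.1 hi).2.2], prod_const]
  congr 2
  exact filter_congr fun i _ => ⟨fun h => h.2, fun h => ⟨h ▸ mem_range.1 hj, h⟩⟩

lemma pow_add_sum_choose_eq_mul_add_pow {R : Type*} [CommSemiring R] (S β : R) {c : ℕ}
    (hc : c ≠ 0) :
    S ^ c + ∑ k ∈ range c, c.choose k • (S ^ k * (k * β * (c * β) ^ (c - k - 1))) =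
      S * (S + c * β) ^ (c - 1) := by
  obtain ⟨n, rfl⟩ := Nat.exists_eq_succ_of_ne_zero hc
  have hterm : ∀ j ∈ range n, (n + 1).choose (j + 1) •
      (S ^ (j + 1) * ((j + 1 : ℕ) * β * ((n + 1 : ℕ) * β) ^ (n + 1 - (j + 1) - 1))) =
      S * (S ^ j * ((n + 1 : ℕ) * β) ^ (n - j) * n.choose j) := fun j hj => by
    obtain ⟨e, rfl⟩ := Nat.exists_eq_add_of_lt (mem_range.1 hj)
    have hchoose := congrArg (Nat.cast (R := R)) (Nat.add_one_mul_choose_eq (j + e + 1) j)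
    push_cast at hchoose
    rw [show j + e + 1 + 1 - (j + 1) - 1 = e by omega, show j + e + 1 - j = e + 1 by omega,
      nsmul_eq_mul]
    calc _ = S ^ (j + 1) * β * ((j + e + 1 + 1 : ℕ) * β) ^ e *
          (((j + e + 1 + 1).choose (j + 1) : ℕ) * ((j : R) + 1)) := by push_cast; ring
      _ = _ := by rw [← hchoose]; push_cast; ring
  conv_lhs => rw [sum_range_succ', sum_congr rfl hterm]
  conv_rhs => rw [Nat.succ_sub_one, add_pow, mul_sum, sum_range_succ]
  simp only [Nat.cast_zero, zero_mul, mul_zero, smul_zero, add_zero, Nat.sub_self, pow_zero,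
    Nat.choose_self, Nat.cast_one, mul_one, pow_succ']
  ring

namespace ParkingFunction

variable {ι : Type*}

/-- Spots are numbered from `0`: car `i` prefers spot `σ i`. Only the values on `C` matter. -/
def IsParking (a b : ℕ) (C : Finset ι) (σ : ι → ℕ) : Prop :=
  ∀ j < #C, j + 1 ≤ #{i ∈ C | σ i < a + j * b}

instance (a b : ℕ) (C : Finset ι) : DecidablePred (IsParking a b C) := fun σ => by
  unfold IsParking
  infer_instance

lemma IsParking.lt {a b : ℕ} {C : Finset ι} {σ : ι → ℕ} (hσ : IsParking a b C σ) {i : ι}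
    (hi : i ∈ C) : σ i < a + (#C - 1) * b := by
  have hC : 0 < #C := card_pos.2 ⟨i, hi⟩
  have hall : {i ∈ C | σ i < a + (#C - 1) * b} = C :=
    eq_of_subset_of_card_le (filter_subset _ _) (by have := hσ (#C - 1) (by omega); omega)
  rw [← hall] at hi
  exact (mem_filter.1 hi).2

lemma not_isParking_zero {b : ℕ} {C : Finset ι} (hC : C.Nonempty) (σ : ι → ℕ) :
    ¬ IsParking 0 b C σ := fun h => by simpa using h 0 (card_pos.2 hC)

section Shift

variable [DecidableEq ι] {a : ℕ} {B C : Finset ι} {σ τ : ι → ℕ}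

lemma filter_lt_eq_iff (hBC : B ⊆ C) :
    {i ∈ C | σ i < a} = B ↔ (∀ i ∈ B, σ i < a) ∧ ∀ i ∈ C \ B, a ≤ σ i := by
  constructor
  · rintro rfl
    exact ⟨fun i hi => (mem_filter.1 hi).2, fun i hi => by simp_all⟩
  · rintro ⟨hB, hCB⟩
    ext i
    by_cases hiB : i ∈ B
    · simp [hiB, hBC hiB, hB i hiB]
    · have := hCB i
      simp_all

lemma card_filter_lt_add_eq (hBC : B ⊆ C) (hB : ∀ i ∈ B, σ i < a)
    (hτ : ∀ i ∈ C \ B, σ i = τ i + a) (n : ℕ) :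
    #{i ∈ C | σ i < a + n} = #B + #{i ∈ C \ B | τ i < n} := by
  have hsplit : {i ∈ C | σ i < a + n} = B ∪ {i ∈ C \ B | τ i < n} := by
    ext i
    by_cases hiB : i ∈ B
    · simp [hiB, hBC hiB, (hB i hiB).trans_le (Nat.le_add_right a n)]
    · by_cases hiC : i ∈ C
      · simp [hiB, hiC, hτ i (mem_sdiff.2 ⟨hiC, hiB⟩), add_comm (τ i)]
      · simp [hiB, hiC]
  rw [hsplit, card_union_of_disjoint (disjoint_sdiff.mono_right (filter_subset _ _))]

/-- The cars of `B` fill the first `a` spots, so the others face an `(|B| b, b)` parking problem. -/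
lemma isParking_iff_sdiff {b : ℕ} (hBC : B ⊆ C) (hB : ∀ i ∈ B, σ i < a)
    (hτ : ∀ i ∈ C \ B, σ i = τ i + a) :
    IsParking a b C σ ↔ IsParking (#B * b) b (C \ B) τ := by
  have hcard : #(C \ B) = #C - #B := card_sdiff_of_subset hBC
  have hle : #B ≤ #C := card_le_card hBC
  simp only [IsParking, card_filter_lt_add_eq hBC hB hτ, hcard]
  constructor
  · intro h j hj
    have := h (#B + j) (by omega)
    rw [add_mul] at this
    omega
  · intro h j hj
    by_cases hjB : j < #B
    · omega
    · have := h (j - #B) (by omega)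
      rw [← add_mul, Nat.add_sub_cancel' (by omega)] at this
      omega

end Shift

variable [Fintype ι] [DecidableEq ι]

/-- The bound on the values is implied by `IsParking` (see `mem_parkingFunctions`); it only makes
the set finite. -/
def parkingFunctions (a b : ℕ) (C : Finset ι) : Finset (ι → ℕ) :=
  {σ ∈ Fintype.piFinset fun i => if i ∈ C then range (a + (#C - 1) * b) else {0} |
    IsParking a b C σ}

lemma mem_parkingFunctions {a b : ℕ} {C : Finset ι} {σ : ι → ℕ} :
    σ ∈ parkingFunctions a b C ↔ (∀ i ∉ C, σ i = 0) ∧ IsParking a b C σ := by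
  simp only [parkingFunctions, mem_filter, Fintype.mem_piFinset]
  constructor
  · rintro ⟨hσ, hp⟩
    exact ⟨fun i hi => by simpa [hi] using hσ i, hp⟩
  · rintro ⟨h0, hp⟩
    refine ⟨fun i => ?_, hp⟩
    split_ifs with hi
    · exact mem_range.2 (hp.lt hi)
    · exact mem_singleton.2 (h0 i hi)

lemma parkingFunctions_empty (a b : ℕ) : parkingFunctions a b (∅ : Finset ι) = {0} := by
  ext σ
  simp [mem_parkingFunctions, IsParking, funext_iff]

lemma parkingFunctions_zero_left (b : ℕ) {C : Finset ι} (hC : C.Nonempty) :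
    parkingFunctions 0 b C = ∅ :=
  eq_empty_of_forall_notMem fun σ hσ => not_isParking_zero hC σ (mem_parkingFunctions.1 hσ).2

def lowFunctions (a : ℕ) (B : Finset ι) : Finset (ι → ℕ) :=
  Fintype.piFinset fun i => if i ∈ B then range a else {0}

lemma mem_lowFunctions {a : ℕ} {B : Finset ι} {f : ι → ℕ} :
    f ∈ lowFunctions a B ↔ (∀ i ∈ B, f i < a) ∧ ∀ i ∉ B, f i = 0 := by
  simp only [lowFunctions, Fintype.mem_piFinset]
  refine ⟨fun h => ⟨fun i hi => by simpa [hi] using h i, fun i hi => by simpa [hi] using h i⟩,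
    fun h i => ?_⟩
  split_ifs with hi
  · exact mem_range.2 (h.1 i hi)
  · exact mem_singleton.2 (h.2 i hi)

lemma sum_lowFunctions_prod {R : Type*} [CommSemiring R] (a : ℕ) (B : Finset ι) (X : ℕ → R) :
    ∑ f ∈ lowFunctions a B, ∏ i ∈ B, X (f i) = (∑ j ∈ range a, X j) ^ #B := by
  have hprod : ∀ f : ι → ℕ, ∏ i ∈ B, X (f i) = ∏ i, if i ∈ B then X (f i) else 1 := fun f => by
    rw [prod_ite_mem, univ_inter]
  have hfactor : ∀ i, ∑ j ∈ (if i ∈ B then range a else {0}), (if i ∈ B then X j else 1) =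
      if i ∈ B then ∑ j ∈ range a, X j else 1 := fun i => by split_ifs <;> simp
  simp_rw [hprod, lowFunctions]
  rw [← prod_univ_sum (fun i => if i ∈ B then range a else {0})
    (fun i j => if i ∈ B then X j else 1)]
  simp_rw [hfactor, prod_ite_mem, univ_inter, prod_const]

section Fiber

variable {a b : ℕ} {B C : Finset ι}

lemma split_mem_lowFunctions_product (hBC : B ⊆ C) {σ : ι → ℕ}
    (hσ : σ ∈ parkingFunctions a b C) (hσB : {i ∈ C | σ i < a} = B) :
    ((fun i => if i ∈ B then σ i else 0), fun i => if i ∈ C \ B then σ i - a else 0) ∈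
      lowFunctions a B ×ˢ parkingFunctions (#B * b) b (C \ B) := by
  obtain ⟨hB, hCB⟩ := (filter_lt_eq_iff hBC).1 hσB
  have hτ : ∀ i ∈ C \ B, σ i = (if i ∈ C \ B then σ i - a else 0) + a := fun i hi => by
    simp only [hi, if_true]
    have := hCB i hi
    omega
  simp only [mem_product, mem_lowFunctions, mem_parkingFunctions]
  refine ⟨⟨fun i hi => by simpa [hi] using hB i hi, fun i hi => if_neg hi⟩, fun i hi => if_neg hi,
    (isParking_iff_sdiff hBC hB hτ).1 (mem_parkingFunctions.1 hσ).2⟩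

lemma merge_mem_parkingFunctions (hBC : B ⊆ C) {f τ : ι → ℕ} (hf : f ∈ lowFunctions a B)
    (hτ : τ ∈ parkingFunctions (#B * b) b (C \ B)) :
    (fun i => if i ∈ C \ B then τ i + a else f i) ∈ parkingFunctions a b C ∧
      {i ∈ C | (if i ∈ C \ B then τ i + a else f i) < a} = B := by
  rw [mem_lowFunctions] at hf
  have hB : ∀ i ∈ B, (if i ∈ C \ B then τ i + a else f i) < a := fun i hi => by
    simpa [hi] using hf.1 i hi
  refine ⟨mem_parkingFunctions.2 ⟨fun i hi => ?_, ?_⟩,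
    (filter_lt_eq_iff hBC).2 ⟨hB, fun i hi => by simp [hi]⟩⟩
  · have hiB : i ∉ B := fun h => hi (hBC h)
    simpa [hi, hiB] using hf.2 i hiB
  · exact (isParking_iff_sdiff hBC hB fun i hi => if_pos hi).2 (mem_parkingFunctions.1 hτ).2

lemma sum_parkingFunctions_filter_lt_eq {R : Type*} [CommSemiring R] (hBC : B ⊆ C) (X : ℕ → R) :
    ∑ σ ∈ parkingFunctions a b C with {i ∈ C | σ i < a} = B, ∏ i ∈ C with σ i < a, X (σ i) =
      (∑ j ∈ range a, X j) ^ #B * #(parkingFunctions (#B * b) b (C \ B)) := by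
  calc _ = ∑ p ∈ lowFunctions a B ×ˢ parkingFunctions (#B * b) b (C \ B), ∏ i ∈ B, X (p.1 i) := by
        refine sum_nbij' (fun σ => (fun i => if i ∈ B then σ i else 0,
            fun i => if i ∈ C \ B then σ i - a else 0))
          (fun p i => if i ∈ C \ B then p.2 i + a else p.1 i)
          (fun σ hσ => split_mem_lowFunctions_product hBC (mem_filter.1 hσ).1 (mem_filter.1 hσ).2)
          (fun p hp => mem_filter.2 (merge_mem_parkingFunctions hBC (mem_product.1 hp).1
            (mem_product.1 hp).2)) (fun σ hσ => ?_) (fun p hp => ?_) (fun σ hσ => ?_)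
        · obtain ⟨hσ, hσB⟩ := mem_filter.1 hσ
          have h0 := (mem_parkingFunctions.1 hσ).1
          have hCB := ((filter_lt_eq_iff hBC).1 hσB).2
          funext i
          by_cases hi : i ∈ C \ B
          · simp [hi, Nat.sub_add_cancel (hCB i hi)]
          · by_cases hiB : i ∈ B
            · simp [hi, hiB]
            · simp [hi, hiB, h0 i (by simp_all)]
        · obtain ⟨hf, hτ⟩ := mem_product.1 hp
          have hf0 := (mem_lowFunctions.1 hf).2
          have hτ0 := (mem_parkingFunctions.1 hτ).1
          refine Prod.ext (funext fun i => ?_) (funext fun i => ?_)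
          · by_cases hiB : i ∈ B
            · simp [hiB]
            · simp [hiB, hf0 i hiB]
          · by_cases hi : i ∈ C \ B
            · simp [hi]
            · simp [hi, hτ0 i hi]
        · rw [(mem_filter.1 hσ).2]
          exact prod_congr rfl fun i hi => by simp [hi]
    _ = _ := by
      simp [sum_product, sum_lowFunctions_prod, ← sum_mul, mul_comm]

end Fiber

theorem sum_prod_parkingFunctions {R : Type*} [CommSemiring R] (a b : ℕ) {C : Finset ι}
    (hC : C.Nonempty) (X : ℕ → R) :
    ∑ σ ∈ parkingFunctions a b C, ∏ i ∈ C with σ i < a, X (σ i) =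
      (∑ j ∈ range a, X j) * ((∑ j ∈ range a, X j) + #C * b) ^ (#C - 1) := by
  induction C using Finset.strongInduction generalizing a X with
  | H C ih =>
  set S := ∑ j ∈ range a, X j
  have hcount : ∀ B ∈ C.powerset, (#(parkingFunctions (#B * b) b (C \ B)) : R) =
      if #B = #C then 1 else (#B * b * (#C * b) ^ (#C - #B - 1) : R) := by
    intro B hB
    have hBC := mem_powerset.1 hB
    rcases eq_or_ne B C with rfl | hne
    · simp [parkingFunctions_empty]
    have hlt : #B < #C := card_lt_card (ssubset_of_subset_of_ne hBC hne)
    rcases B.eq_empty_or_nonempty with rfl | hBne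
    · simp [parkingFunctions_zero_left b hC, (card_pos.2 hC).ne]
    have hD : (C \ B).Nonempty := sdiff_nonempty_of_card_lt_card hlt
    have := ih (C \ B) (sdiff_ssubset hBC hBne) (#B * b) hD (fun _ => (1 : R))
    simp only [prod_const_one, sum_const, card_range, nsmul_one, card_sdiff_of_subset hBC] at this
    have hsum : ((#B * b : ℕ) : R) + ((#C - #B : ℕ) : R) * b = #C * b := by
      rw [← Nat.cast_mul, ← Nat.cast_add, ← add_mul, Nat.add_sub_cancel' hlt.le, Nat.cast_mul]
    rw [this, hsum, if_neg hlt.ne, Nat.cast_mul]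
  rw [← sum_fiberwise_of_maps_to (g := fun σ => {i ∈ C | σ i < a}) (t := C.powerset)
      fun σ _ => mem_powerset.2 (filter_subset _ _)]
  rw [sum_congr rfl fun B hB => by
    rw [sum_parkingFunctions_filter_lt_eq (mem_powerset.1 hB), hcount B hB]]
  rw [sum_powerset_apply_card
      (fun k => S ^ k * if k = #C then 1 else (k * b * (#C * b) ^ (#C - k - 1) : R)),
    sum_range_succ, add_comm, ← pow_add_sum_choose_eq_mul_add_pow S b (card_pos.2 hC).ne']
  simp only [Nat.choose_self, if_true, mul_one, one_smul]
  exact congrArg _ (sum_congr rfl fun k hk => by rw [if_neg (mem_range.1 hk).ne])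

lemma mem_abpf_iff {a b m : ℕ} {π : Fin m → Fin (a + (m - 1) * b)} :
    π ∈ abpf a b m ↔ IsParking a b univ fun i => (π i : ℕ) := by
  simp only [abpf, mem_filter, mem_univ, true_and, IsParking, card_univ, Fintype.card_fin]
  exact ⟨fun h j hj => h ⟨j, hj⟩, fun h i => h i i.isLt⟩

lemma sum_abpf_eq_sum_parkingFunctions {M : Type*} [AddCommMonoid M] (a b m : ℕ)
    (f : (Fin m → ℕ) → M) :
    ∑ π ∈ abpf a b m, f (fun i => π i) = ∑ σ ∈ parkingFunctions a b univ, f σ := by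
  refine sum_nbij (fun π i => π i) (fun π hπ => ?_) (fun π _ π' _ h => ?_) (fun σ hσ => ?_)
    fun _ _ => rfl
  · exact mem_parkingFunctions.2 ⟨fun i hi => absurd (mem_univ i) hi, mem_abpf_iff.1 hπ⟩
  · exact funext fun i => Fin.ext (congrFun h i)
  · have hp := (mem_parkingFunctions.1 hσ).2
    have hlt : ∀ i, σ i < a + (m - 1) * b := fun i => by
      simpa using hp.lt (mem_univ i)
    exact ⟨fun i => ⟨σ i, hlt i⟩, mem_abpf_iff.2 hp, rfl⟩

end ParkingFunction

open ParkingFunction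

theorem gf_ABPF_multivariate_general (a b m : ℕ) (hm : 1 ≤ m)
    (x : Fin a → ℚ) :
    ∑ π ∈ abpf a b m,
        ∏ j : Fin a,
          x j ^ (Finset.univ.filter (fun i : Fin m => (π i : ℕ) = (j : ℕ))).card =
      (∑ j, x j) * ((∑ j, x j) + m * b) ^ (m - 1) := by
  set X : ℕ → ℚ := fun k => if h : k < a then x ⟨k, h⟩ else 0
  have hX : ∀ j : Fin a, X j = x j := fun j => dif_pos j.isLt
  have hsum : ∑ j ∈ range a, X j = ∑ j, x j := by
    rw [← Fin.sum_univ_eq_sum_range]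
    simp only [hX]
  have hne : (univ : Finset (Fin m)).Nonempty := univ_nonempty_iff.2 ⟨⟨0, hm⟩⟩
  calc _ = ∑ π ∈ abpf a b m, ∏ i with (π i : ℕ) < a, X (π i) := by
        refine sum_congr rfl fun π _ => ?_
        rw [prod_filter_lt_eq_prod_pow, ← Fin.prod_univ_eq_prod_range]
        simp only [hX]
    _ = ∑ σ ∈ parkingFunctions a b univ, ∏ i with σ i < a, X (σ i) :=
        sum_abpf_eq_sum_parkingFunctions a b m fun σ => ∏ i with σ i < a, X (σ i)
    _ = _ := by rw [sum_prod_parkingFunctions a b hne X, hsum, card_univ, Fintype.card_fin]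

theorem gf_ABPF_multivariate (a b m : ℕ) (ha : 1 ≤ a) (hb : 1 ≤ b) (hm : 1 ≤ m)
    (x : Fin a → ℚ) :
    ∑ π ∈ abpf a b m,
        ∏ j : Fin a,
          x j ^ (Finset.univ.filter (fun i : Fin m => (π i : ℕ) = (j : ℕ))).card =
      (∑ j, x j) * ((∑ j, x j) + m * b) ^ (m - 1) :=
  gf_ABPF_multivariate_general a b m hm x
end
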